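/- arXiv:2101.11535 — 9 statements merged into one kernel-verified Lean document; each statement's English description precedes it below -/
import Mathlib

section
/- Let n = 2m, q = 2^m, and let F, G be quadratic functions over F_{2^n} with F(0) = G(0) = 0. Let a ∈ F_{2^n} with a + a^q ≠ 0, and define f(x) = a·Tr^n_m(F(x)) + a^q·Tr^n_m(G(x)), where Tr^n_m(x) = x + x^q. Then f is APN over F_{2^n} if and only if for every nonzero d ∈ F_{2^n}, the only solutions x ∈ F_{2^n} to the system { Δ_{d,F}(x) ∈ F_{2^m}, Δ_{d,G}(x) ∈ F_{2^m} } are x = 0 and x = 1, where Δ_{d,F}(x) := F(dx) + F(dx+d) + F(d) and similarly for G. -/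
/-!
A quadratic `f` has second derivative `x ↦ D_d D_x f(0)` additive in `x`, so two solutions
`x, x₀` of `f x + f (x + d) = β` differ by one of its zeros, while `0`, `d` and every zero solve
the equation for `β = f d + f 0`: `f` is APN iff for `d ≠ 0` these zeros are exactly `0` and `d`.
For `f = a Tr(F) + σ a Tr(G)` with `σ x = x ^ q`, this second derivative is `a u + σ a v`, where
`u`, `v` are the traces of those of `F` and `G`. Both are fixed by the involution `σ`, and on its
fixed field `a u + σ a v = 0` forces `u = v = 0` since `a + σ a ≠ 0`; finally `Tr y = 0` iff `y`
is fixed by `σ`, i.e. lies in `F_{2^m}`.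
-/

/-- `D_d D_x F(0)` in characteristic `2`; when `F 0 = 0`, `secondDiff F d (d * x)` is the
paper's `Δ_{d,F}(x)`. -/
def secondDiff {R : Type*} [Add R] [Zero R] (F : R → R) (d x : R) : R :=
  F x + F (x + d) + F d + F 0

section APN

variable {R : Type*} [Ring R] [CharP R 2]

lemma secondDiff_eq_zero_iff (f : R → R) (d x : R) :
    secondDiff f d x = 0 ↔ f x + f (x + d) = f 0 + f (0 + d) := by
  rw [secondDiff, zero_add, add_assoc, CharTwo.add_eq_zero, add_comm (f d)]

lemma apn_iff_secondDiff_eq_zero [Finite R] (f : R → R)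
    (hf : ∀ d x y, secondDiff f d (x + y) = secondDiff f d x + secondDiff f d y) :
    (∀ d : R, d ≠ 0 → ∀ β : R, {x | f x + f (x + d) = β}.ncard ≤ 2) ↔
      ∀ d : R, d ≠ 0 → ∀ x, secondDiff f d x = 0 → x = 0 ∨ x = d := by
  constructor
  · intro hAPN d hd x hx
    by_contra! hx0d
    have hsub : ({0, d, x} : Set R) ⊆ {z | f z + f (z + d) = f 0 + f (0 + d)} := by
      refine Set.insert_subset_iff.2 ⟨rfl, Set.insert_subset_iff.2 ⟨?_, ?_⟩⟩
      · change f d + f (d + d) = f 0 + f (0 + d)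
        rw [CharTwo.add_self_eq_zero, zero_add, add_comm]
      · exact Set.singleton_subset_iff.2 ((secondDiff_eq_zero_iff f d x).1 hx)
    have h3 : ({0, d, x} : Set R).ncard = 3 :=
      Set.ncard_eq_three.2 ⟨0, d, x, hd.symm, hx0d.1.symm, hx0d.2.symm, rfl⟩
    have := Set.ncard_le_ncard hsub (Set.toFinite _)
    have := hAPN d hd (f 0 + f (0 + d))
    omega
  · intro hker d hd β
    rcases Set.eq_empty_or_nonempty {x | f x + f (x + d) = β} with hS | ⟨x₀, hx₀⟩
    · simp [hS]
    have hsub : {x | f x + f (x + d) = β} ⊆ {x₀, x₀ + d} := by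
      intro x (hx : f x + f (x + d) = β)
      have hzero : secondDiff f d (x + x₀) = 0 := by
        rw [hf, secondDiff, secondDiff, hx, show f x₀ + f (x₀ + d) = β from hx₀]
        exact CharTwo.add_self_eq_zero _
      rcases hker d hd _ hzero with h | h
      · exact Or.inl (CharTwo.add_eq_zero.1 h)
      · exact Or.inr ((CharTwo.add_eq_iff_eq_add.1 h).trans (add_comm _ _))
    calc {x | f x + f (x + d) = β}.ncard ≤ ({x₀, x₀ + d} : Set R).ncard :=
          Set.ncard_le_ncard hsub (Set.toFinite _)
      _ ≤ 2 := (Set.ncard_insert_le _ _).trans (by simp)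

end APN

lemma forall_eq_zero_or_eq_iff_forall_mul {K : Type*} [DivisionRing K] {d : K}
    (hd : d ≠ 0) (P : K → Prop) :
    (∀ y, P y → y = 0 ∨ y = d) ↔ ∀ x, P (d * x) → x = 0 ∨ x = 1 := by
  constructor
  · intro h x hx
    simpa [hd] using h _ hx
  · intro h y hy
    have hy' : P (d * (d⁻¹ * y)) := by rwa [mul_inv_cancel_left₀ hd]
    rcases h _ hy' with h0 | h1
    · simp_all
    · exact Or.inr (by rw [← mul_inv_cancel_left₀ hd y, h1, mul_one])

section RelativeTrace

variable {K : Type*} [Field K] [CharP K 2] (σ : K →+* K)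

lemma eq_zero_of_mul_add_map_mul_eq_zero (hσ : ∀ x, σ (σ x) = x) {a u v : K}
    (ha : a + σ a ≠ 0) (hu : σ u = u) (hv : σ v = v) (h : a * u + σ a * v = 0) :
    u = 0 ∧ v = 0 := by
  have hσh : σ a * u + a * v = 0 := by simpa [hu, hv, hσ] using congrArg σ h
  have huv : u = v := by
    have : (a + σ a) * (u + v) = 0 := by linear_combination h + hσh
    exact CharTwo.add_eq_zero.1 ((mul_eq_zero.1 this).resolve_left ha)
  subst huv
  have hau : (a + σ a) * u = 0 := by linear_combination h
  have hu0 : u = 0 := (mul_eq_zero.1 hau).resolve_left ha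
  exact ⟨hu0, hu0⟩

lemma mul_trace_add_mul_trace_eq_zero_iff (hσ : ∀ x, σ (σ x) = x) {a : K} (ha : a + σ a ≠ 0)
    (y z : K) : a * (y + σ y) + σ a * (z + σ z) = 0 ↔ σ y = y ∧ σ z = z := by
  have htrace : ∀ w, σ (w + σ w) = w + σ w := fun w => by rw [map_add, hσ, add_comm]
  constructor
  · intro h
    obtain ⟨hy, hz⟩ := eq_zero_of_mul_add_map_mul_eq_zero σ hσ ha (htrace y) (htrace z) h
    exact ⟨(CharTwo.add_eq_zero.1 hy).symm, (CharTwo.add_eq_zero.1 hz).symm⟩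
  · rintro ⟨hy, hz⟩
    simp [hy, hz, CharTwo.add_self_eq_zero]

end RelativeTrace

lemma secondDiff_trace_combination {K : Type*} [CommRing K] {σ : K →+* K} {a : K}
    {F G f : K → K} (hf : ∀ x, f x = a * (F x + σ (F x)) + σ a * (G x + σ (G x))) (d x : K) :
    secondDiff f d x = a * (secondDiff F d x + σ (secondDiff F d x)) +
      σ a * (secondDiff G d x + σ (secondDiff G d x)) := by
  simp only [secondDiff, hf, map_add]
  ring

lemma secondDiff_add_of_trace_combination {K : Type*} [CommRing K] {σ : K →+* K} {a : K}
    {F G f : K → K} (hf : ∀ x, f x = a * (F x + σ (F x)) + σ a * (G x + σ (G x)))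
    (hF : ∀ d x y, secondDiff F d (x + y) = secondDiff F d x + secondDiff F d y)
    (hG : ∀ d x y, secondDiff G d (x + y) = secondDiff G d x + secondDiff G d y) (d x y : K) :
    secondDiff f d (x + y) = secondDiff f d x + secondDiff f d y := by
  simp only [secondDiff_trace_combination hf, hF, hG, map_add]
  ring

lemma GaloisField.iterateFrobenius_involutive (p : ℕ) [Fact p.Prime] {m : ℕ} (hm : 0 < m)
    (x : GaloisField p (2 * m)) :
    iterateFrobenius _ p m (iterateFrobenius (GaloisField p (2 * m)) p m x) = x := by
  have : Fintype (GaloisField p (2 * m)) := Fintype.ofFinite _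
  have hcard : Fintype.card (GaloisField p (2 * m)) = p ^ (2 * m) := by
    rw [← Nat.card_eq_fintype_card, GaloisField.card p (2 * m) (by omega)]
  rw [iterateFrobenius_def, iterateFrobenius_def, ← pow_mul, ← pow_add, ← two_mul, ← hcard,
    FiniteField.pow_card]

theorem stmt_6 (m : ℕ) (hm : 0 < m) (F G : GaloisField 2 (2 * m) → GaloisField 2 (2 * m))
    (hF0 : F 0 = 0) (hG0 : G 0 = 0)
    (hFquad : ∀ a x y : GaloisField 2 (2 * m),
      F (x + y) + F (x + y + a) + F a + F 0 =
        (F x + F (x + a) + F a + F 0) + (F y + F (y + a) + F a + F 0))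
    (hGquad : ∀ a x y : GaloisField 2 (2 * m),
      G (x + y) + G (x + y + a) + G a + G 0 =
        (G x + G (x + a) + G a + G 0) + (G y + G (y + a) + G a + G 0))
    (a : GaloisField 2 (2 * m)) (ha : a + a ^ (2 ^ m) ≠ 0)
    (f : GaloisField 2 (2 * m) → GaloisField 2 (2 * m))
    (hf : ∀ x, f x = a * (F x + (F x) ^ (2 ^ m)) + a ^ (2 ^ m) * (G x + (G x) ^ (2 ^ m))) :
    (∀ d : GaloisField 2 (2 * m), d ≠ 0 → ∀ β : GaloisField 2 (2 * m),
        {x : GaloisField 2 (2 * m) | f x + f (x + d) = β}.ncard ≤ 2) ↔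
      (∀ d : GaloisField 2 (2 * m), d ≠ 0 → ∀ x : GaloisField 2 (2 * m),
        ((F (d * x) + F (d * x + d) + F d) ^ (2 ^ m) = F (d * x) + F (d * x + d) + F d ∧
         (G (d * x) + G (d * x + d) + G d) ^ (2 ^ m) = G (d * x) + G (d * x + d) + G d) →
        x = 0 ∨ x = 1) := by
  set σ := iterateFrobenius (GaloisField 2 (2 * m)) 2 m
  have hσ := GaloisField.iterateFrobenius_involutive 2 hm
  have hdiff := secondDiff_trace_combination (σ := σ) hf
  have hΔ : ∀ H : GaloisField 2 (2 * m) → GaloisField 2 (2 * m), H 0 = 0 →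
      ∀ d x, H (d * x) + H (d * x + d) + H d = secondDiff H d (d * x) := by
    intro H hH0 d x
    rw [secondDiff, hH0, add_zero]
  rw [apn_iff_secondDiff_eq_zero f
    (secondDiff_add_of_trace_combination (σ := σ) hf hFquad hGquad)]
  refine forall₂_congr fun d hd => ?_
  rw [forall_eq_zero_or_eq_iff_forall_mul hd]
  refine forall_congr' fun x => ?_
  rw [hdiff, mul_trace_add_mul_trace_eq_zero_iff σ hσ ha, hΔ F hF0, hΔ G hG0]
  rfl
end

section
/- Let n = 2m with m odd and q = 2^m. If c ∈ F_{2^n} satisfies c^3·(c + c^2 + c^4)^q ∈ F_{2^m}, then c is a cube in F_{2^n}. -/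
/-!
Put `u = c^(q-1)`. Applying `y ↦ y^q` to the hypothesis and dividing by `c^4` leaves
`u (u + 1) (c^3 u^2 + (c + 1) u + 1) = 0`, and modulo the last factor
`(1 + u c^2)^3 = u (1 + c)^3`, so `u` is a cube. The norm `c^(q+1)` lies in `F_q`, where cubing
is bijective because `3 ∣ q + 1`. Hence `c = c^3 u / c^(q+1)` is a cube.
-/

theorem exists_pow_three_eq_of_pow_eq_self {M : Type*} [Monoid M] {a : M} {q : ℕ}
    (hq : 3 ∣ q + 1) (ha : a ^ q = a) : ∃ γ : M, γ ^ 3 = a := by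
  obtain ⟨k, hk⟩ := hq
  refine ⟨a ^ (2 * k - 1), ?_⟩
  calc (a ^ (2 * k - 1)) ^ 3 = a ^ (q - 1) * a ^ q := by
        rw [← pow_mul, ← pow_add]; congr 1; omega
    _ = a := by rw [ha, ← pow_succ, Nat.sub_add_cancel (by omega), ha]

theorem GaloisField.pow_pow_char_pow_eq_self (p m : ℕ) [Fact p.Prime]
    (x : GaloisField p (2 * m)) : (x ^ p ^ m) ^ p ^ m = x := by
  rcases eq_or_ne m 0 with rfl | hm
  · simp
  have := Fintype.ofFinite (GaloisField p (2 * m))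
  have hcard : Fintype.card (GaloisField p (2 * m)) = p ^ m * p ^ m := by
    rw [← Nat.card_eq_fintype_card, GaloisField.card p (2 * m) (by omega), two_mul, pow_add]
  rw [← pow_mul, ← hcard, FiniteField.pow_card]

section CharTwo

variable {F : Type*} [Field F] [CharP F 2]

theorem relation_of_pow_three_mul_eq {c u : F} (hc : c ≠ 0) (hu0 : u ≠ 0) (hu1 : u ≠ 1)
    (h : (u * c) ^ 3 * (c + c ^ 2 + c ^ 4) = c ^ 3 * (u * c + (u * c) ^ 2 + (u * c) ^ 4)) :
    c ^ 3 * u ^ 2 + (c + 1) * u + 1 = 0 := by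
  have h2 : (2 : F) = 0 := CharTwo.two_eq_zero
  have hfactor : c ^ 4 * (u * (u - 1)) * (c ^ 3 * u ^ 2 + (c + 1) * u + 1) = 0 := by
    linear_combination h + (c ^ 7 * u ^ 4 - c ^ 7 * u ^ 3) * h2
  have hne : c ^ 4 * (u * (u - 1)) ≠ 0 :=
    mul_ne_zero (pow_ne_zero _ hc) (mul_ne_zero hu0 (sub_ne_zero.mpr hu1))
  exact (mul_eq_zero.mp hfactor).resolve_left hne

theorem pow_three_eq_of_relation {c u : F} (hc : c + 1 ≠ 0)
    (hR : c ^ 3 * u ^ 2 + (c + 1) * u + 1 = 0) : ((1 + u * c ^ 2) / (c + 1)) ^ 3 = u := by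
  have h2 : (2 : F) = 0 := CharTwo.two_eq_zero
  rw [div_pow, div_eq_iff (pow_ne_zero _ hc)]
  linear_combination (1 + u * c ^ 3) * hR
    + (-u - 2 * u * c - u * c ^ 3 - u ^ 2 * c ^ 3 + u ^ 2 * c ^ 4) * h2

theorem exists_pow_three_eq_of_pow_three_mul_eq {c u : F} (hc : c ≠ 0) (hu0 : u ≠ 0)
    (h : (u * c) ^ 3 * (c + c ^ 2 + c ^ 4) = c ^ 3 * (u * c + (u * c) ^ 2 + (u * c) ^ 4)) :
    ∃ v : F, v ^ 3 = u := by
  rcases eq_or_ne u 1 with rfl | hu1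
  · exact ⟨1, one_pow 3⟩
  have hR := relation_of_pow_three_mul_eq hc hu0 hu1 h
  have hc1 : c + 1 ≠ 0 := by
    intro hc1
    obtain rfl : c = -1 := eq_neg_of_add_eq_zero_left hc1
    have h2 : (2 : F) = 0 := CharTwo.two_eq_zero
    have hsq : (u - 1) ^ 2 = 0 := by linear_combination -hR + (1 - u) * h2
    exact hu1 (sub_eq_zero.mp (pow_eq_zero_iff two_ne_zero |>.mp hsq))
  exact ⟨_, pow_three_eq_of_relation hc1 hR⟩

end CharTwo

theorem stmt_7_general (m : ℕ) (hodd : Odd m) (c : GaloisField 2 (2 * m))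
    (h : (c ^ 3 * (c + c ^ 2 + c ^ 4) ^ (2 ^ m)) ^ (2 ^ m) =
          c ^ 3 * (c + c ^ 2 + c ^ 4) ^ (2 ^ m)) :
    ∃ β : GaloisField 2 (2 * m), β ^ 3 = c := by
  set q := 2 ^ m
  have hqq (x : GaloisField 2 (2 * m)) : (x ^ q) ^ q = x :=
    GaloisField.pow_pow_char_pow_eq_self 2 m x
  rcases eq_or_ne c 0 with rfl | hc
  · exact ⟨0, zero_pow three_ne_zero⟩
  set u := c ^ q / c
  have hcu : c ^ q = u * c := (div_mul_cancel₀ _ hc).symm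
  have hu0 : u ≠ 0 := div_ne_zero (pow_ne_zero _ hc) hc
  have hfrob : (c + c ^ 2 + c ^ 4) ^ q = u * c + (u * c) ^ 2 + (u * c) ^ 4 := by
    rw [add_pow_char_pow, add_pow_char_pow, pow_right_comm c 2, pow_right_comm c 4, hcu]
  obtain ⟨v, hv⟩ : ∃ v, v ^ 3 = u := by
    refine exists_pow_three_eq_of_pow_three_mul_eq hc hu0 ?_
    rwa [mul_pow, hqq, pow_right_comm, hcu, hfrob] at h
  obtain ⟨γ, hγ⟩ : ∃ γ, γ ^ 3 = c ^ q * c :=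
    exists_pow_three_eq_of_pow_eq_self (by simpa using hodd.nat_add_dvd_pow_add_pow 2 1)
      (by rw [mul_pow, hqq]; exact mul_comm _ _)
  refine ⟨c * v / γ, ?_⟩
  rw [div_pow, mul_pow, hv, hγ, hcu]
  field_simp

theorem stmt_7 (m : ℕ) (hm : 0 < m) (hodd : Odd m) (c : GaloisField 2 (2 * m))
    (h : (c ^ 3 * (c + c ^ 2 + c ^ 4) ^ (2 ^ m)) ^ (2 ^ m) =
          c ^ 3 * (c + c ^ 2 + c ^ 4) ^ (2 ^ m)) :
    ∃ β : GaloisField 2 (2 * m), β ^ 3 = c :=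
  stmt_7_general m hodd c h
end

section
/- Let n = 2m with m odd and gcd(3, m) = 1, and let s be a positive integer with 3s ≡ 1 (mod n). If x ∈ F_{2^n} \ {0, 1} satisfies (x + x^2)/(x + x^{2^s})^{2^{2s} - 2^s + 1} ∈ F_{2^m}, then x + x^{2^s} is a cube in F_{2^n}. -/
/-!
Write `σ a = a ^ 2 ^ s`; since `3 * s ≡ 1 [MOD n]`, `σ³` is squaring. Put `u = x + σ x` and
`w = x + σ² x`. In characteristic 2 one has `w * σ w = (x + x²) * σ u + u * σ² u`, so the
hypothesis says exactly that `w * σ w / (u * σ² u)` lies in `F_{2^m}`, hence is killed by the cubic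
character `χ a = a ^ ((2 ^ n - 1) / 3)` (here `3 ∣ 2 ^ m + 1` as `m` is odd). As `s` is odd, `σ` acts
on cube roots of unity by squaring and `σ²` trivially, so `χ (w * σ w) = χ w ^ 3 = 1` and
`χ (u * σ² u) = χ u ^ 2`. Thus `χ u ^ 2 = 1 = χ u ^ 3`, so `χ u = 1` and `u` is a cube. In the
degenerate cases `u = 0` or `w = 0` (then `x ∈ F_4`) one has `u ∈ {0, 1}`.
-/

section CubeRootsOfUnity

variable {M : Type*} [Monoid M] {ζ : M}

theorem pow_two_pow_of_pow_three_eq_one (hζ : ζ ^ 3 = 1) {s : ℕ} (hs : Odd s) :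
    ζ ^ 2 ^ s = ζ ^ 2 := by
  obtain ⟨k, rfl⟩ := hs
  rw [pow_eq_pow_mod _ hζ, pow_succ, pow_mul, Nat.mul_mod, Nat.pow_mod]
  norm_num

theorem pow_two_pow_two_mul_of_pow_three_eq_one (hζ : ζ ^ 3 = 1) (s : ℕ) :
    ζ ^ 2 ^ (2 * s) = ζ := by
  rw [pow_eq_pow_mod _ hζ, pow_mul, Nat.pow_mod]
  norm_num

theorem eq_one_of_pow_three_eq_one_of_sq_eq_one (h3 : ζ ^ 3 = 1) (h2 : ζ ^ 2 = 1) : ζ = 1 := by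
  rw [← h3, pow_succ, h2, one_mul]

end CubeRootsOfUnity

theorem sq_eq_three_mul_sub_one_mul_add_one {q c : ℕ} (hq : 1 ≤ q) (hc : q + 1 = 3 * c) :
    q ^ 2 = 3 * ((q - 1) * c) + 1 := by
  zify [hq] at hc ⊢
  linear_combination (q - 1 : ℤ) * hc

theorem pow_two_pow_of_pow_four_eq_self {G₀ : Type*} [GroupWithZero G₀] {x : G₀} (hx : x ^ 4 = x)
    {s : ℕ} (hs : Odd s) : x ^ 2 ^ s = x ^ 2 := by
  rcases eq_or_ne x 0 with rfl | hx0
  · simp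
  refine pow_two_pow_of_pow_three_eq_one (mul_left_cancel₀ hx0 ?_) hs
  rw [mul_one, ← pow_succ']
  exact hx

theorem IsCyclic.exists_pow_eq_of_pow_eq_one {G : Type*} [Group G] [IsCyclic G] [Finite G]
    {d t : ℕ} (hcard : Nat.card G = d * t) {g : G} (hg : g ^ t = 1) : ∃ h : G, h ^ d = g := by
  obtain ⟨a, ha⟩ := IsCyclic.exists_generator (α := G)
  obtain ⟨n, rfl⟩ : g ∈ Submonoid.powers a := mem_powers_iff_mem_zpowers.2 (ha g)
  have ht : 0 < t := Nat.pos_of_mul_pos_left (hcard ▸ Nat.card_pos)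
  have hdvd : d * t ∣ n * t := by
    rw [← hcard, ← orderOf_eq_card_of_forall_mem_zpowers ha]
    exact orderOf_dvd_of_pow_eq_one (by rwa [pow_mul])
  obtain ⟨k, rfl⟩ := Nat.dvd_of_mul_dvd_mul_right ht hdvd
  exact ⟨a ^ k, by rw [← pow_mul, mul_comm]⟩

namespace FiniteField

theorem exists_pow_eq_of_pow_eq_one {K : Type*} [Field K] [Fintype K] {d t : ℕ}
    (hcard : Fintype.card K = d * t + 1) {a : K} (ha : a ≠ 0) (h : a ^ t = 1) :
    ∃ b : K, b ^ d = a := by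
  obtain ⟨b, hb⟩ := IsCyclic.exists_pow_eq_of_pow_eq_one (g := Units.mk0 a ha)
    (by rw [Nat.card_units, Nat.card_eq_fintype_card, hcard, Nat.add_sub_cancel])
    (Units.ext (by simpa using h))
  exact ⟨b, by simpa using congrArg Units.val hb⟩

theorem pow_pow_eq_of_modEq {K : Type*} [GroupWithZero K] [Fintype K] {p n k l : ℕ}
    (hcard : Fintype.card K = p ^ n) (h : k ≡ l [MOD n]) (a : K) : a ^ p ^ k = a ^ p ^ l := by
  wlog hlk : l ≤ k generalizing k l
  · exact (this h.symm (by omega)).symm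
  obtain ⟨j, hj⟩ := (Nat.modEq_iff_dvd' hlk).1 h.symm
  rw [show k = n * j + l by omega, pow_add, pow_mul a, pow_mul p, ← hcard, pow_card_pow]

end FiniteField

section CharTwo

variable {K : Type*} [Field K] [CharP K 2] {s : ℕ} {x : K}

theorem add_pow_two_pow_eq_zero_or_one (hx : x ^ 4 = x) (hs : Odd s) :
    x + x ^ 2 ^ s = 0 ∨ x + x ^ 2 ^ s = 1 := by
  refine IsIdempotentElem.iff_eq_zero_or_one.1 ?_
  rw [IsIdempotentElem, ← sq, pow_two_pow_of_pow_four_eq_self hx hs, CharTwo.add_sq, ← pow_mul, hx,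
    add_comm]

theorem div_pow_add_one_eq_div (hσ : ∀ a : K, a ^ 2 ^ (3 * s) = a ^ 2) (hu : x + x ^ 2 ^ s ≠ 0) :
    (x + x ^ 2) / (x + x ^ 2 ^ s) ^ (2 ^ (2 * s) - 2 ^ s + 1) + 1 =
      (x + x ^ 2 ^ (2 * s)) * (x + x ^ 2 ^ (2 * s)) ^ 2 ^ s /
        ((x + x ^ 2 ^ s) * (x + x ^ 2 ^ s) ^ 2 ^ (2 * s)) := by
  set y := x ^ 2 ^ s
  set z := x ^ 2 ^ (2 * s)
  set u := x + y
  have hyz : y ^ 2 ^ s = z := by rw [← pow_mul, ← pow_add, ← two_mul]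
  have hzx : z ^ 2 ^ s = x ^ 2 := by rw [← pow_mul, ← pow_add, ← hσ x]; ring_nf
  have hσu : u ^ 2 ^ s = y + z := by rw [add_pow_char_pow, hyz]
  have hσσu : u ^ 2 ^ (2 * s) = z + x ^ 2 := by
    rw [two_mul, pow_add, pow_mul, hσu, add_pow_char_pow, hyz, hzx]
  have hσw : (x + z) ^ 2 ^ s = y + x ^ 2 := by rw [add_pow_char_pow, hzx]
  have hE : u ^ (2 ^ (2 * s) - 2 ^ s + 1) * (y + z) = (z + x ^ 2) * u := by
    have hle : 2 ^ s ≤ 2 ^ (2 * s) := Nat.pow_le_pow_right two_pos (by omega)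
    rw [← hσu, ← hσσu, ← pow_add, ← pow_succ]
    congr 1
    omega
  have hE0 : u ^ (2 ^ (2 * s) - 2 ^ s + 1) ≠ 0 := pow_ne_zero _ hu
  rw [hσw, hσσu, div_add_one hE0, div_eq_div_iff hE0 (mul_ne_zero hu (hσσu ▸ pow_ne_zero _ hu))]
  linear_combination (-(x + x ^ 2)) * hE +
    (x * z + x ^ 2 * y) * u ^ (2 ^ (2 * s) - 2 ^ s + 1) * (CharTwo.two_eq_zero (R := K))

theorem add_pow_two_pow_pow_eq_one [Fintype K] {m t : ℕ} (hcard : Fintype.card K = 3 * t + 1)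
    (hmt : 2 ^ m - 1 ∣ t) (hs : Odd s) (hσ : ∀ a : K, a ^ 2 ^ (3 * s) = a ^ 2)
    (hu : x + x ^ 2 ^ s ≠ 0) (hw : x + x ^ 2 ^ (2 * s) ≠ 0)
    (h : ((x + x ^ 2) / (x + x ^ 2 ^ s) ^ (2 ^ (2 * s) - 2 ^ s + 1)) ^ 2 ^ m =
      (x + x ^ 2) / (x + x ^ 2 ^ s) ^ (2 ^ (2 * s) - 2 ^ s + 1)) :
    (x + x ^ 2 ^ s) ^ t = 1 := by
  set u := x + x ^ 2 ^ s
  set w := x + x ^ 2 ^ (2 * s)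
  have hcube : ∀ a : K, a ≠ 0 → (a ^ t) ^ 3 = 1 := fun a ha => by
    rw [← pow_mul, mul_comm, show 3 * t = Fintype.card K - 1 by omega]
    exact FiniteField.pow_card_sub_one_eq_one a ha
  have hfixed : ∀ a : K, a ≠ 0 → a ^ 2 ^ m = a → a ^ t = 1 := fun a ha haq => by
    have hq : a ^ (2 ^ m - 1) = 1 := mul_left_cancel₀ ha <| by
      rw [mul_one, ← pow_succ', Nat.sub_add_cancel Nat.one_le_two_pow, haq]
    obtain ⟨c, rfl⟩ := hmt
    rw [pow_mul, hq, one_pow]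
  have hquot := hfixed _
    (div_ne_zero (mul_ne_zero hw (pow_ne_zero _ hw)) (mul_ne_zero hu (pow_ne_zero _ hu)))
    (by rw [← div_pow_add_one_eq_div hσ hu, add_pow_char_pow, one_pow, h])
  have hnum : (w * w ^ 2 ^ s) ^ t = 1 := by
    rw [mul_pow, pow_right_comm w, pow_two_pow_of_pow_three_eq_one (hcube w hw) hs, ← pow_succ']
    exact hcube w hw
  have hden : (u * u ^ 2 ^ (2 * s)) ^ t = (u ^ t) ^ 2 := by
    rw [mul_pow, pow_right_comm u, pow_two_pow_two_mul_of_pow_three_eq_one (hcube u hu), sq]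
  rw [div_pow, hnum, hden, one_div, inv_eq_one] at hquot
  exact eq_one_of_pow_three_eq_one_of_sq_eq_one (hcube u hu) hquot

end CharTwo

theorem stmt_8_general (m s : ℕ) (hodd : Odd m)
    (hs1 : 3 * s ≡ 1 [MOD 2 * m])
    (x : GaloisField 2 (2 * m))
    (h : ((x + x ^ 2) / (x + x ^ (2 ^ s)) ^ (2 ^ (2 * s) - 2 ^ s + 1)) ^ (2 ^ m) =
          (x + x ^ 2) / (x + x ^ (2 ^ s)) ^ (2 ^ (2 * s) - 2 ^ s + 1)) :
    ∃ β : GaloisField 2 (2 * m), β ^ 3 = x + x ^ (2 ^ s) := by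
  let := Fintype.ofFinite (GaloisField 2 (2 * m))
  have hcard : Fintype.card (GaloisField 2 (2 * m)) = 2 ^ (2 * m) := by
    rw [← Nat.card_eq_fintype_card, GaloisField.card 2 (2 * m) (by have := hodd.pos; omega)]
  have hs_odd : Odd s := by
    have := hs1.of_mul_right m
    rw [Nat.odd_iff]
    unfold Nat.ModEq at this
    omega
  have hσ : ∀ a, a ^ 2 ^ (3 * s) = a ^ 2 := FiniteField.pow_pow_eq_of_modEq hcard hs1
  by_cases hu : x + x ^ 2 ^ s = 0
  · exact ⟨0, by rw [hu, zero_pow three_ne_zero]⟩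
  by_cases hw : x + x ^ 2 ^ (2 * s) = 0
  · have hx4 : x ^ 4 = x := by
      have hfix := (CharTwo.add_eq_zero.1 hw).symm
      have := FiniteField.pow_pow_eq_of_modEq hcard (hs1.mul_left 2) x
      rwa [show 2 * (3 * s) = 2 * s + 2 * s + 2 * s by ring, pow_add, pow_add, pow_mul, pow_mul,
        hfix, hfix, hfix, eq_comm] at this
    exact ⟨1, by rw [one_pow, (add_pow_two_pow_eq_zero_or_one hx4 hs_odd).resolve_left hu]⟩
  obtain ⟨c, hc⟩ := hodd.nat_add_dvd_pow_add_pow 2 1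
  have hcard' : Fintype.card (GaloisField 2 (2 * m)) = 3 * ((2 ^ m - 1) * c) + 1 := by
    rw [hcard, pow_mul', sq_eq_three_mul_sub_one_mul_add_one Nat.one_le_two_pow (by simpa using hc)]
  exact FiniteField.exists_pow_eq_of_pow_eq_one hcard' hu
    (add_pow_two_pow_pow_eq_one hcard' (dvd_mul_right _ _) hs_odd hσ hu hw h)

theorem stmt_8 (m s : ℕ) (hm : 0 < m) (hodd : Odd m) (h3m : Nat.gcd 3 m = 1)
    (hs : 0 < s) (hs1 : 3 * s ≡ 1 [MOD 2 * m])
    (x : GaloisField 2 (2 * m)) (hx0 : x ≠ 0) (hx1 : x ≠ 1)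
    (h : ((x + x ^ 2) / (x + x ^ (2 ^ s)) ^ (2 ^ (2 * s) - 2 ^ s + 1)) ^ (2 ^ m) =
          (x + x ^ 2) / (x + x ^ (2 ^ s)) ^ (2 ^ (2 * s) - 2 ^ s + 1)) :
    ∃ β : GaloisField 2 (2 * m), β ^ 3 = x + x ^ (2 ^ s) :=
  stmt_8_general m s hodd hs1 x h
end

section
/- Let n = 2m with m odd, q = 2^m, a ∈ F_{2^n} with a + a^q ≠ 0, and b ∈ F_{2^n} a non-cube. Then f(x) = a·Tr^n_m(b x^3) + a^q·Tr^n_m(b^3 x^9) is an APN function over F_{2^n}. -/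
/-!
Let `q = 2 ^ m`. If `x` and `y` have the same `d`-derivative, put `e = x + y`. Since `x ^ 3` and
`x ^ 9` are Gold functions, the condition reads `a Tr(P) + a^q Tr(R) = 0` with
`P = b (d e² + d² e)` and `R = b³ (d e⁸ + d⁸ e)`; conjugating by `x ↦ x ^ q` and using
`a + a^q ≠ 0` puts `P` and `R` in `𝔽_q`. With `e = d y`, `z = y² + y` and `c = b d³` this says
`c z ∈ 𝔽_q` and `c³ (z⁴ + z² + z) ∈ 𝔽_q`. If `z ≠ 0`, then either `z ∈ 𝔽_q`, or the norm
`N = z ^ (q + 1)` satisfies `N² + N = z + z^q`; then `z = σ² + σ` for a root `σ` of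
`X² + N X + 1` (found by solving an Artin–Schreier equation over `𝔽_q` with a cube root of unity),
and `σ ∉ 𝔽_q` forces `σ ^ (q + 1) = 1` and `z ^ (q - 1) = σ⁻³`. In both cases
`z ^ ((q² - 1) / 3) = 1`, hence also `c ^ ((q² - 1) / 3) = 1`, so `c` and then `b` are cubes.
Thus `z = 0`, i.e. `e ∈ {0, d}`.
-/

lemma Nat.two_pow_mod_three_of_odd {m : ℕ} (hm : Odd m) : 2 ^ m % 3 = 2 := by
  obtain ⟨k, rfl⟩ := hm
  rw [pow_succ, pow_mul, Nat.mul_mod, Nat.pow_mod]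
  norm_num

lemma Nat.two_pow_two_mul_sub_one_eq_of_odd {m : ℕ} (hm : Odd m) :
    2 ^ (2 * m) - 1 = 3 * ((2 ^ m - 1) * ((2 ^ m + 1) / 3)) := by
  have h3 : 3 * ((2 ^ m + 1) / 3) = 2 ^ m + 1 :=
    Nat.mul_div_cancel' (by have := two_pow_mod_three_of_odd hm; omega)
  rw [mul_left_comm, h3, mul_comm (2 ^ m - 1), ← Nat.sq_sub_sq, one_pow, ← pow_mul']

theorem IsCyclic.exists_pow_eq_of_pow_eq_one_s10 {G : Type*} [CommGroup G] [IsCyclic G] [Finite G]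
    {k u : ℕ} (hG : Nat.card G = k * u) {x : G} (hx : x ^ u = 1) : ∃ y, y ^ k = x := by
  have hk : k ≠ 0 := by rintro rfl; exact Nat.card_pos.ne' (zero_mul u ▸ hG)
  have hle : (powMonoidHom k : G →* G).range ≤ (powMonoidHom u).ker := by
    rintro _ ⟨y, rfl⟩
    simp [← pow_mul, ← hG]
  have heq := Subgroup.eq_of_le_of_card_ge hle (by
    rw [IsCyclic.card_powMonoidHom_ker, IsCyclic.card_powMonoidHom_range, hG,
      Nat.gcd_mul_left_left, Nat.gcd_mul_right_left,
      Nat.mul_div_cancel_left _ (Nat.pos_of_ne_zero hk)])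
  obtain ⟨y, hy⟩ : x ∈ (powMonoidHom k).range := heq ▸ hx
  exact ⟨y, hy⟩

theorem FiniteField.exists_pow_eq_of_pow_eq_one_s10 {K : Type*} [Field K] [Fintype K] {k u : ℕ}
    (hK : Fintype.card K - 1 = k * u) {x : K} (hx0 : x ≠ 0) (hx : x ^ u = 1) :
    ∃ y, y ^ k = x := by
  obtain ⟨y, hy⟩ := IsCyclic.exists_pow_eq_of_pow_eq_one_s10 (x := Units.mk0 x hx0)
    (by rw [Nat.card_units, Nat.card_eq_fintype_card, hK]) (Units.ext (by simpa using hx))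
  exact ⟨y, by simpa using congrArg Units.val hy⟩

theorem FiniteField.exists_sq_add_self_add_one_eq_zero {K : Type*} [Field K] [Fintype K]
    (hK : 3 ∣ Fintype.card K - 1) : ∃ ω : K, ω ^ 2 + ω + 1 = 0 := by
  classical
  have : Fact (Nat.Prime 3) := ⟨Nat.prime_three⟩
  obtain ⟨ω, hω⟩ := exists_prime_orderOf_dvd_card 3 (G := Kˣ)
    (by rwa [Fintype.card_units])
  have h3 : (ω : K) ^ 3 = 1 := by rw [← Units.val_pow_eq_pow_val, ← hω, pow_orderOf_eq_one]; rfl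
  have h1 : (ω : K) ≠ 1 := by
    intro h
    rw [Units.val_eq_one.mp h, orderOf_one] at hω
    norm_num at hω
  refine ⟨ω, (mul_eq_zero.mp ?_).resolve_left (sub_ne_zero.mpr h1)⟩
  linear_combination h3

namespace CharTwo

variable {R : Type*} [CommRing R] [CharP R 2]

theorem second_diff_pow_two_pow_add_one (k : ℕ) (x y d : R) :
    x ^ (2 ^ k + 1) + (x + d) ^ (2 ^ k + 1) + (y ^ (2 ^ k + 1) + (y + d) ^ (2 ^ k + 1)) =
      d * (x + y) ^ 2 ^ k + d ^ 2 ^ k * (x + y) := by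
  simp only [pow_succ _ (2 ^ k), add_pow_char_pow]
  grind

theorem sq_add_self_sum_pow_two_pow (w : R) (k : ℕ) :
    (∑ i ∈ Finset.range k, w ^ 2 ^ i) ^ 2 + ∑ i ∈ Finset.range k, w ^ 2 ^ i = w ^ 2 ^ k + w := by
  induction k with
  | zero => simp
  | succ k ih =>
    rw [Finset.sum_range_succ, add_sq, pow_succ 2 k, pow_mul]
    grind

theorem sq_add_self_pow_four_add (y : R) :
    (y ^ 2 + y) ^ 4 + (y ^ 2 + y) ^ 2 + (y ^ 2 + y) = y ^ 8 + y := by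
  grind

end CharTwo

section Frobenius

variable {K : Type*} [Field K] [CharP K 2] {m : ℕ}

theorem pow_two_pow_eq_self_of_mul_trace_add_mul_trace_eq_zero
    (hq : ∀ x : K, (x ^ 2 ^ m) ^ 2 ^ m = x) {a P R : K} (ha : a + a ^ 2 ^ m ≠ 0)
    (h : a * (P + P ^ 2 ^ m) + a ^ 2 ^ m * (R + R ^ 2 ^ m) = 0) :
    P ^ 2 ^ m = P ∧ R ^ 2 ^ m = R := by
  have hconj : a ^ 2 ^ m * (P + P ^ 2 ^ m) + a * (R + R ^ 2 ^ m) = 0 := by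
    have := congrArg (· ^ 2 ^ m) h
    simp only [add_pow_char_pow, mul_pow, hq, zero_pow (pow_ne_zero m two_ne_zero)] at this
    grind
  have hPR : (a + a ^ 2 ^ m) * (P + P ^ 2 ^ m + (R + R ^ 2 ^ m)) = 0 := by grind
  have hP : (a + a ^ 2 ^ m) * (P + P ^ 2 ^ m) = 0 := by grind
  grind

theorem CharTwo.eq_or_mul_sq_add_mul_eq_add {z Z : K} (hz : z ≠ 0) (hZ : Z ≠ 0)
    (h : z ^ 3 * (Z ^ 4 + Z ^ 2 + Z) = Z ^ 3 * (z ^ 4 + z ^ 2 + z)) :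
    Z = z ∨ (z * Z) ^ 2 + z * Z = z + Z := by
  have : z * Z * ((Z + z) * ((z * Z) ^ 2 + z * Z + z + Z)) = 0 := by grind
  simp only [mul_eq_zero, hz, hZ, false_or] at this
  grind

theorem exists_sq_add_self_eq_of_pow_two_pow_eq_self (hm : Odd m) {ω : K}
    (hω : ω ^ 2 + ω + 1 = 0) {θ : K} (hθ : θ ^ 2 ^ m = θ) : ∃ ζ, ζ ^ 2 + ζ = θ := by
  have hω3 : ω ^ 3 = 1 := by linear_combination (ω - 1) * hω
  have hωq : ω ^ 2 ^ m = ω ^ 2 := by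
    rw [← Nat.div_add_mod (2 ^ m) 3, Nat.two_pow_mod_three_of_odd hm, pow_add, pow_mul, hω3,
      one_pow, one_mul]
  refine ⟨∑ i ∈ Finset.range m, (θ * ω) ^ 2 ^ i, ?_⟩
  rw [CharTwo.sq_add_self_sum_pow_two_pow, mul_pow, hθ, hωq]
  grind

theorem exists_sq_add_mul_add_one_eq_zero (hm : Odd m) {ω : K} (hω : ω ^ 2 + ω + 1 = 0)
    {N : K} (hN0 : N ≠ 0) (hN : N ^ 2 ^ m = N) : ∃ ρ, ρ ^ 2 + N * ρ + 1 = 0 := by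
  obtain ⟨ζ, hζ⟩ := exists_sq_add_self_eq_of_pow_two_pow_eq_self hm hω (θ := (N ^ 2)⁻¹)
    (by rw [inv_pow, pow_right_comm, hN])
  refine ⟨N * ζ, ?_⟩
  field_simp at hζ
  grind

theorem exists_sq_add_mul_add_one_eq_zero_and_eq (hm : Odd m) {ω : K} (hω : ω ^ 2 + ω + 1 = 0)
    {N : K} (hN0 : N ≠ 0) (hN : N ^ 2 ^ m = N) {z : K} (hz : z ^ 2 + (N ^ 2 + N) * z + N = 0) :
    ∃ σ, σ ^ 2 + N * σ + 1 = 0 ∧ z = σ ^ 2 + σ := by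
  obtain ⟨ρ, hρ⟩ := exists_sq_add_mul_add_one_eq_zero hm hω hN0 hN
  have hρ0 : ρ ≠ 0 := by rintro rfl; simp at hρ
  have : (z + ρ ^ 2 + ρ) * (ρ ^ 2 * z + ρ + 1) = 0 := by grind
  rcases mul_eq_zero.mp this with h | h
  · exact ⟨ρ, hρ, by grind⟩
  · refine ⟨ρ⁻¹, ?_, ?_⟩ <;> field_simp <;> grind

theorem pow_two_pow_eq_self_or_mul_eq_one {N σ : K} (hN : N ^ 2 ^ m = N)
    (hσ : σ ^ 2 + N * σ + 1 = 0) : σ ^ 2 ^ m = σ ∨ σ * σ ^ 2 ^ m = 1 := by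
  have hconj := congrArg (· ^ 2 ^ m) hσ
  simp only [add_pow_char_pow, mul_pow, hN, one_pow, zero_pow (pow_ne_zero m two_ne_zero)] at hconj
  rw [pow_right_comm] at hconj
  have : (σ ^ 2 ^ m + σ) * (σ ^ 2 ^ m + σ + N) = 0 := by grind
  rcases mul_eq_zero.mp this with h | h
  · left; grind
  · right; grind

theorem pow_eq_one_of_eq_or_mul_sq_add_mul_eq_add (hm : Odd m)
    (hq : ∀ x : K, (x ^ 2 ^ m) ^ 2 ^ m = x) {ω : K} (hω : ω ^ 2 + ω + 1 = 0) {z : K}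
    (hz0 : z ≠ 0) (h : z ^ 2 ^ m = z ∨ (z * z ^ 2 ^ m) ^ 2 + z * z ^ 2 ^ m = z + z ^ 2 ^ m) :
    z ^ ((2 ^ m - 1) * ((2 ^ m + 1) / 3)) = 1 := by
  have hsub : z ^ (2 ^ m - 1) = z ^ 2 ^ m * z⁻¹ := by
    rw [pow_sub₀ z hz0 Nat.one_le_two_pow, pow_one]
  by_cases hfix : z ^ 2 ^ m = z
  · rw [pow_mul, hsub, hfix, mul_inv_cancel₀ hz0, one_pow]
  set N := z * z ^ 2 ^ m
  have hN : N ^ 2 ^ m = N := by rw [mul_pow, hq, mul_comm]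
  have hN0 : N ≠ 0 := mul_ne_zero hz0 (pow_ne_zero _ hz0)
  obtain ⟨σ, hσ, hzσ⟩ := exists_sq_add_mul_add_one_eq_zero_and_eq hm hω hN0 hN
    (z := z) (by grind)
  have hzq : z ^ 2 ^ m = (σ ^ 2 ^ m) ^ 2 + σ ^ 2 ^ m := by
    rw [hzσ, add_pow_char_pow, pow_right_comm]
  rcases pow_two_pow_eq_self_or_mul_eq_one hN hσ with hσq | hσq
  · exact absurd (hzq.trans (by rw [hσq, hzσ])) hfix
  have hσ3 : z ^ (2 ^ m - 1) = (σ ^ 3)⁻¹ := by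
    have hσ0 : σ ≠ 0 := left_ne_zero_of_mul_eq_one hσq
    rw [hsub, hzq]
    field_simp
    grind
  have h3 : 3 * ((2 ^ m + 1) / 3) = 2 ^ m + 1 :=
    Nat.mul_div_cancel' (by have := Nat.two_pow_mod_three_of_odd hm; omega)
  rw [pow_mul, hσ3, inv_pow, ← pow_mul, h3, pow_succ', hσq, inv_one]

theorem pow_eq_one_of_pow_two_pow_eq_self (hm : Odd m) (hq : ∀ x : K, (x ^ 2 ^ m) ^ 2 ^ m = x)
    {ω : K} (hω : ω ^ 2 + ω + 1 = 0) {c z : K} (hc : c ≠ 0) (hz : z ≠ 0)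
    (hP : (c * z) ^ 2 ^ m = c * z)
    (hR : (c ^ 3 * (z ^ 4 + z ^ 2 + z)) ^ 2 ^ m = c ^ 3 * (z ^ 4 + z ^ 2 + z)) :
    c ^ ((2 ^ m - 1) * ((2 ^ m + 1) / 3)) = 1 := by
  have hcz : (c * z) ^ (2 ^ m - 1) = 1 := by
    rw [pow_sub₀ _ (mul_ne_zero hc hz) Nat.one_le_two_pow, hP, pow_one,
      mul_inv_cancel₀ (mul_ne_zero hc hz)]
  rw [mul_pow] at hP
  simp only [mul_pow, add_pow_char_pow] at hR
  rw [pow_right_comm c, pow_right_comm z 4, pow_right_comm z 2] at hR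
  have hrel : z ^ 3 * ((z ^ 2 ^ m) ^ 4 + (z ^ 2 ^ m) ^ 2 + z ^ 2 ^ m) =
      (z ^ 2 ^ m) ^ 3 * (z ^ 4 + z ^ 2 + z) := by
    refine mul_left_cancel₀ (pow_ne_zero 3 (pow_ne_zero (2 ^ m) hc)) ?_
    linear_combination z ^ 3 * hR - (z ^ 4 + z ^ 2 + z) *
      ((c ^ 2 ^ m * z ^ 2 ^ m) ^ 2 + c ^ 2 ^ m * z ^ 2 ^ m * (c * z) + (c * z) ^ 2) * hP
  have hz' := pow_eq_one_of_eq_or_mul_sq_add_mul_eq_add hm hq hω hz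
    (CharTwo.eq_or_mul_sq_add_mul_eq_add hz (pow_ne_zero _ hz) hrel)
  have := mul_pow c z ((2 ^ m - 1) * ((2 ^ m + 1) / 3))
  rwa [pow_mul (c * z), hcz, one_pow, hz', mul_one, eq_comm] at this

end Frobenius

section FiniteField

variable {K : Type*} [Field K] [Fintype K] {m : ℕ}

theorem pow_two_pow_pow_two_pow (hK : Fintype.card K = 2 ^ (2 * m)) (x : K) :
    (x ^ 2 ^ m) ^ 2 ^ m = x := by
  rw [← pow_mul, ← pow_add, ← two_mul, ← hK, FiniteField.pow_card]

theorem exists_sq_add_self_add_one_eq_zero_of_card (hK : Fintype.card K = 2 ^ (2 * m)) :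
    ∃ ω : K, ω ^ 2 + ω + 1 = 0 :=
  FiniteField.exists_sq_add_self_add_one_eq_zero
    (by rw [hK, pow_mul]; simpa using Nat.sub_dvd_pow_sub_pow 4 1 m)

variable [CharP K 2]

theorem eq_zero_or_eq_of_pow_two_pow_eq_self (hK : Fintype.card K = 2 ^ (2 * m)) (hm : Odd m)
    {b d e : K} (hb : ¬∃ β, β ^ 3 = b) (hd : d ≠ 0)
    (hP : (b * (d * e ^ 2 + d ^ 2 * e)) ^ 2 ^ m = b * (d * e ^ 2 + d ^ 2 * e))
    (hR : (b ^ 3 * (d * e ^ 8 + d ^ 8 * e)) ^ 2 ^ m = b ^ 3 * (d * e ^ 8 + d ^ 8 * e)) :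
    e = 0 ∨ e = d := by
  obtain ⟨y, rfl⟩ : ∃ y, e = d * y := ⟨e / d, by field_simp⟩
  by_contra hne
  have hz : y ^ 2 + y ≠ 0 := fun h => hne <| by
    rcases mul_eq_zero.mp (show y * (y + 1) = 0 by grind) with h | h <;> grind
  have hb0 : b ≠ 0 := by rintro rfl; exact hb ⟨0, by ring⟩
  have hc : b * d ^ 3 ≠ 0 := mul_ne_zero hb0 (pow_ne_zero 3 hd)
  obtain ⟨ω, hω⟩ := exists_sq_add_self_add_one_eq_zero_of_card hK
  have hPc : b * (d * (d * y) ^ 2 + d ^ 2 * (d * y)) = b * d ^ 3 * (y ^ 2 + y) := by ring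
  have hRc : b ^ 3 * (d * (d * y) ^ 8 + d ^ 8 * (d * y)) =
      (b * d ^ 3) ^ 3 * ((y ^ 2 + y) ^ 4 + (y ^ 2 + y) ^ 2 + (y ^ 2 + y)) := by
    rw [CharTwo.sq_add_self_pow_four_add]
    ring
  rw [hPc] at hP
  rw [hRc] at hR
  have hpow := pow_eq_one_of_pow_two_pow_eq_self hm (pow_two_pow_pow_two_pow hK) hω hc hz hP hR
  obtain ⟨γ, hγ⟩ := FiniteField.exists_pow_eq_of_pow_eq_one_s10
    (by rw [hK]; exact Nat.two_pow_two_mul_sub_one_eq_of_odd hm) hc hpow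
  exact hb ⟨γ / d, by rw [div_pow, hγ]; field_simp⟩

theorem eq_or_eq_add_of_add_apply_add_eq (hK : Fintype.card K = 2 ^ (2 * m)) (hm : Odd m)
    {a b : K} (ha : a + a ^ 2 ^ m ≠ 0) (hb : ¬∃ β, β ^ 3 = b) {f : K → K}
    (hf : ∀ x, f x = a * (b * x ^ 3 + (b * x ^ 3) ^ 2 ^ m) +
      a ^ 2 ^ m * (b ^ 3 * x ^ 9 + (b ^ 3 * x ^ 9) ^ 2 ^ m))
    {d : K} (hd : d ≠ 0) {x y : K} (h : f x + f (x + d) = f y + f (y + d)) :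
    y = x ∨ y = x + d := by
  have h3 := CharTwo.second_diff_pow_two_pow_add_one 1 x y d
  have h9 := CharTwo.second_diff_pow_two_pow_add_one 3 x y d
  norm_num at h3 h9
  have hsum : a * (b * (d * (x + y) ^ 2 + d ^ 2 * (x + y)) +
        (b * (d * (x + y) ^ 2 + d ^ 2 * (x + y))) ^ 2 ^ m) +
      a ^ 2 ^ m * (b ^ 3 * (d * (x + y) ^ 8 + d ^ 8 * (x + y)) +
        (b ^ 3 * (d * (x + y) ^ 8 + d ^ 8 * (x + y))) ^ 2 ^ m) = 0 := by
    have h0 : f x + f (x + d) + (f y + f (y + d)) = 0 := by grind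
    simp only [hf] at h0
    rw [← h0, mul_comm b, mul_comm (b ^ 3), ← h3, ← h9]
    simp only [add_mul, add_pow_char_pow]
    ring
  obtain ⟨hP, hR⟩ := pow_two_pow_eq_self_of_mul_trace_add_mul_trace_eq_zero
    (pow_two_pow_pow_two_pow hK) ha hsum
  rcases eq_zero_or_eq_of_pow_two_pow_eq_self hK hm hb hd hP hR with h | h <;> grind

end FiniteField

theorem Set.ncard_le_two_of_forall_eq_or_eq {α : Type*} {s : Set α} (g : α → α)
    (h : ∀ x ∈ s, ∀ y ∈ s, y = x ∨ y = g x) : s.ncard ≤ 2 := by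
  rcases s.eq_empty_or_nonempty with rfl | ⟨x, hx⟩
  · simp
  calc s.ncard ≤ ({x, g x} : Set α).ncard := Set.ncard_le_ncard (h x hx) (Set.toFinite _)
    _ ≤ 2 := (Set.ncard_insert_le _ _).trans (by simp)

theorem stmt_10_general (m : ℕ) (hodd : Odd m)
    (a b : GaloisField 2 (2 * m))
    (ha : a + a ^ (2 ^ m) ≠ 0)
    (hb : ¬ ∃ β : GaloisField 2 (2 * m), β ^ 3 = b)
    (f : GaloisField 2 (2 * m) → GaloisField 2 (2 * m))
    (hf : ∀ x, f x = a * (b * x ^ 3 + (b * x ^ 3) ^ (2 ^ m)) +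
        a ^ (2 ^ m) * (b ^ 3 * x ^ 9 + (b ^ 3 * x ^ 9) ^ (2 ^ m))) :
    ∀ d : GaloisField 2 (2 * m), d ≠ 0 → ∀ β : GaloisField 2 (2 * m),
      {x : GaloisField 2 (2 * m) | f x + f (x + d) = β}.ncard ≤ 2 := by
  intro d hd β
  let := Fintype.ofFinite (GaloisField 2 (2 * m))
  have hK : Fintype.card (GaloisField 2 (2 * m)) = 2 ^ (2 * m) := by
    rw [← Nat.card_eq_fintype_card, GaloisField.card 2 _ (by have := hodd.pos; omega)]
  exact Set.ncard_le_two_of_forall_eq_or_eq (· + d) fun x hx y hy =>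
    eq_or_eq_add_of_add_apply_add_eq hK hodd ha hb hf hd (hx.trans hy.symm)

theorem stmt_10 (m : ℕ) (hm : 0 < m) (hodd : Odd m)
    (a b : GaloisField 2 (2 * m))
    (ha : a + a ^ (2 ^ m) ≠ 0)
    (hb : ¬ ∃ β : GaloisField 2 (2 * m), β ^ 3 = b)
    (f : GaloisField 2 (2 * m) → GaloisField 2 (2 * m))
    (hf : ∀ x, f x = a * (b * x ^ 3 + (b * x ^ 3) ^ (2 ^ m)) +
        a ^ (2 ^ m) * (b ^ 3 * x ^ 9 + (b ^ 3 * x ^ 9) ^ (2 ^ m))) :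
    ∀ d : GaloisField 2 (2 * m), d ≠ 0 → ∀ β : GaloisField 2 (2 * m),
      {x : GaloisField 2 (2 * m) | f x + f (x + d) = β}.ncard ≤ 2 :=
  stmt_10_general m hodd a b ha hb f hf
end

section
/- Let n = 2m with m odd, q = 2^m, a ∈ F_{2^n} with a + a^q ≠ 0, and b, c ∈ F_{2^n}^* with c^2/b ∉ F_{2^m}. Then f(x) = a·Tr^n_m(b x^3) + a^q·Tr^n_m(c x^{2^{n-1} + 1}) is an APN function over F_{2^n}. -/
/-!
Write `σ x = x ^ q` and `Tr x = x + σ x`. Since `(x ^ 3) ^ (2 ^ (2m-1)) = x ^ (2 ^ (2m-1) + 1)`,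
`f = L ∘ (· ^ 3)` for the additive map `L y = a Tr(b y) + σ a Tr(c √y)`, so `f` is APN as soon as
`L` is injective, the cube being APN in characteristic 2. If `L y = 0`, then `u = Tr(b y)` and
`v = Tr(c √y)` are fixed by `σ` and satisfy `a u = σ a v`, hence also `σ a u = a v`; adding,
`(a + σ a)(u + v) = 0`, which forces `u = v = 0`. Thus `b y` and `c √y`, hence also `c² y`, are
fixed by `σ`, and for `y ≠ 0` so is their quotient `c² / b`, which is excluded.
-/

open Function

def IsAPN {G H : Type*} [AddGroup G] [Add H] (f : G → H) : Prop :=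
  ∀ d : G, d ≠ 0 → ∀ β : H, {x : G | f x + f (x + d) = β}.ncard ≤ 2

theorem IsAPN.of_derivative_eq {G H : Type*} [AddGroup G] [Add H] {f : G → H}
    (hf : ∀ d : G, d ≠ 0 → ∀ x y, f x + f (x + d) = f y + f (y + d) → x = y ∨ x = y + d) :
    IsAPN f := by
  intro d hd β
  rcases Set.eq_empty_or_nonempty {x | f x + f (x + d) = β} with hempty | ⟨x₀, hx₀⟩
  · simp [hempty]
  have hsub : {x | f x + f (x + d) = β} ⊆ {x₀, x₀ + d} := fun x hx =>
    hf d hd x x₀ (hx.trans hx₀.symm)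
  calc {x | f x + f (x + d) = β}.ncard ≤ ({x₀, x₀ + d} : Set G).ncard :=
        Set.ncard_le_ncard hsub (Set.toFinite _)
    _ ≤ 2 := (Set.ncard_insert_le _ _).trans (by simp)

theorem IsAPN.addMonoidHom_comp {G H K : Type*} [AddGroup G] [AddZeroClass H] [AddZeroClass K]
    {g : G → H} (hg : IsAPN g) {L : H →+ K} (hL : Injective L) : IsAPN (L ∘ g) := by
  intro d hd β
  rcases Set.eq_empty_or_nonempty {x | (L ∘ g) x + (L ∘ g) (x + d) = β} with hempty | ⟨x₀, hx₀⟩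
  · rw [hempty, Set.ncard_empty]; omega
  convert hg d hd (g x₀ + g (x₀ + d)) using 2
  ext x
  simp only [Set.mem_ofPred_eq, comp_apply, ← map_add] at hx₀ ⊢
  rw [← hx₀, hL.eq_iff]

theorem isAPN_pow_three {R : Type*} [CommRing R] [NoZeroDivisors R] [CharP R 2] :
    IsAPN fun x : R => x ^ 3 := by
  have h2 : (2 : R) = 0 := CharTwo.two_eq_zero
  refine IsAPN.of_derivative_eq fun d hd x y h => ?_
  have hfactor : d * ((x + y) * (x + y + d)) = 0 := by
    linear_combination h + (-d * x ^ 2 + d * x * y + 2 * d * y ^ 2 - d ^ 2 * x + 2 * d ^ 2 * y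
      - x ^ 3 + y ^ 3) * h2
  rcases mul_eq_zero.mp ((mul_eq_zero.mp hfactor).resolve_left hd) with h | h
  · exact Or.inl (CharTwo.add_eq_zero.mp h)
  · exact Or.inr (CharTwo.add_eq_zero.mp (by rwa [add_assoc] at h))

section TraceForm

variable {F : Type*} [Field F]

def traceForm (σ τ : F →+* F) (a b c : F) : F →+ F :=
  AddMonoidHom.mk' (fun y => a * (b * y + σ (b * y)) + σ a * (c * τ y + σ (c * τ y)))
    fun u v => by simp only [mul_add, map_add]; ring

theorem traceForm_apply (σ τ : F →+* F) (a b c y : F) :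
    traceForm σ τ a b c y = a * (b * y + σ (b * y)) + σ a * (c * τ y + σ (c * τ y)) :=
  rfl

theorem eq_zero_and_eq_zero_of_mul_eq_map_mul [CharP F 2] {σ : F →+* F} (hσ : Involutive σ)
    {a u v : F} (ha : a + σ a ≠ 0) (hu : σ u = u) (hv : σ v = v) (h : a * u = σ a * v) :
    u = 0 ∧ v = 0 := by
  have h2 : (2 : F) = 0 := CharTwo.two_eq_zero
  have h' : σ a * u = a * v := by simpa only [map_mul, hu, hv, hσ a] using congrArg σ h
  have huv : (a + σ a) * (u + v) = 0 := by linear_combination h + h' + (a * v + σ a * v) * h2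
  have hvu : v = u := (CharTwo.add_eq_zero.mp ((mul_eq_zero.mp huv).resolve_left ha)).symm
  subst hvu
  have hu0 : (a + σ a) * v = 0 := by linear_combination h + σ a * v * h2
  exact ⟨(mul_eq_zero.mp hu0).resolve_left ha, (mul_eq_zero.mp hu0).resolve_left ha⟩

theorem traceForm_injective [CharP F 2] {σ τ : F →+* F} (hσ : Involutive σ)
    (hτ : ∀ y, τ y ^ 2 = y) {a b c : F} (ha : a + σ a ≠ 0) (hcb : σ (c ^ 2 / b) ≠ c ^ 2 / b) :
    Injective (traceForm σ τ a b c) := by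
  refine (injective_iff_map_eq_zero _).mpr fun y hy => ?_
  have trace_fixed : ∀ x, σ (x + σ x) = x + σ x := fun x => by rw [map_add, hσ x, add_comm]
  have fixed_of_trace_eq_zero : ∀ x, x + σ x = 0 → σ x = x := fun x hx =>
    (CharTwo.add_eq_zero.mp hx).symm
  rw [traceForm_apply] at hy
  obtain ⟨hby, hcy⟩ := eq_zero_and_eq_zero_of_mul_eq_map_mul hσ ha (trace_fixed _)
    (trace_fixed _) (CharTwo.add_eq_zero.mp hy)
  have hcy' : σ (c ^ 2 * y) = c ^ 2 * y := by
    rw [← hτ y, ← mul_pow, map_pow, fixed_of_trace_eq_zero _ hcy]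
  by_contra hy0
  apply hcb
  rw [← mul_div_mul_right (c ^ 2) b hy0, map_div₀, fixed_of_trace_eq_zero _ hby, hcy']

end TraceForm

section Frobenius

variable {F : Type*} [Field F] [CharP F 2] {m : ℕ}

theorem iterateFrobenius_involutive (hF : ∀ x : F, x ^ 2 ^ (2 * m) = x) :
    Involutive (iterateFrobenius F 2 m) := fun x => by
  rw [iterateFrobenius_def, iterateFrobenius_def, ← pow_mul, ← pow_add, ← two_mul, hF]

theorem iterateFrobenius_sq (hm : 0 < m) (hF : ∀ x : F, x ^ 2 ^ (2 * m) = x) (y : F) :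
    iterateFrobenius F 2 (2 * m - 1) y ^ 2 = y := by
  rw [iterateFrobenius_def, ← pow_mul, ← pow_succ, Nat.sub_add_cancel (by omega), hF]

theorem traceForm_iterateFrobenius_pow_three (hm : 0 < m) (hF : ∀ x : F, x ^ 2 ^ (2 * m) = x)
    (a b c x : F) :
    traceForm (iterateFrobenius F 2 m) (iterateFrobenius F 2 (2 * m - 1)) a b c (x ^ 3) =
      a * (b * x ^ 3 + (b * x ^ 3) ^ (2 ^ m)) +
        a ^ (2 ^ m) * (c * x ^ (2 ^ (2 * m - 1) + 1) + (c * x ^ (2 ^ (2 * m - 1) + 1)) ^ (2 ^ m)) := by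
  have hcube : (x ^ 3) ^ 2 ^ (2 * m - 1) = x ^ (2 ^ (2 * m - 1) + 1) := by
    have hsq := iterateFrobenius_sq hm hF x
    rw [iterateFrobenius_def] at hsq
    calc (x ^ 3) ^ 2 ^ (2 * m - 1) = (x ^ 2 ^ (2 * m - 1)) ^ 2 * x ^ 2 ^ (2 * m - 1) := by ring
      _ = x ^ (2 ^ (2 * m - 1) + 1) := by rw [hsq]; ring
  simp only [traceForm_apply, iterateFrobenius_def, hcube]

end Frobenius

theorem stmt_12_general (m : ℕ) (hm : 0 < m)
    (a b c : GaloisField 2 (2 * m))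
    (ha : a + a ^ (2 ^ m) ≠ 0)
    (hcb : (c ^ 2 / b) ^ (2 ^ m) ≠ c ^ 2 / b)
    (f : GaloisField 2 (2 * m) → GaloisField 2 (2 * m))
    (hf : ∀ x, f x = a * (b * x ^ 3 + (b * x ^ 3) ^ (2 ^ m)) +
        a ^ (2 ^ m) * (c * x ^ (2 ^ (2 * m - 1) + 1) + (c * x ^ (2 ^ (2 * m - 1) + 1)) ^ (2 ^ m))) :
    ∀ d : GaloisField 2 (2 * m), d ≠ 0 → ∀ β : GaloisField 2 (2 * m),
      {x : GaloisField 2 (2 * m) | f x + f (x + d) = β}.ncard ≤ 2 := by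
  have hF : ∀ x : GaloisField 2 (2 * m), x ^ 2 ^ (2 * m) = x := by
    have := Fintype.ofFinite (GaloisField 2 (2 * m))
    intro x
    rw [← GaloisField.card 2 (2 * m) (by omega), Nat.card_eq_fintype_card]
    exact FiniteField.pow_card x
  have hfL : f = traceForm (iterateFrobenius _ 2 m) (iterateFrobenius _ 2 (2 * m - 1)) a b c ∘
      (· ^ 3) :=
    funext fun x => (hf x).trans (traceForm_iterateFrobenius_pow_three hm hF a b c x).symm
  subst hfL
  exact (isAPN_pow_three (R := GaloisField 2 (2 * m))).addMonoidHom_comp <|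
    traceForm_injective (iterateFrobenius_involutive hF) (iterateFrobenius_sq hm hF)
      (by rwa [iterateFrobenius_def]) (by rwa [iterateFrobenius_def])

theorem stmt_12 (m : ℕ) (hm : 0 < m) (hodd : Odd m)
    (a b c : GaloisField 2 (2 * m))
    (ha : a + a ^ (2 ^ m) ≠ 0) (hb : b ≠ 0) (hc : c ≠ 0)
    (hcb : (c ^ 2 / b) ^ (2 ^ m) ≠ c ^ 2 / b)
    (f : GaloisField 2 (2 * m) → GaloisField 2 (2 * m))
    (hf : ∀ x, f x = a * (b * x ^ 3 + (b * x ^ 3) ^ (2 ^ m)) +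
        a ^ (2 ^ m) * (c * x ^ (2 ^ (2 * m - 1) + 1) + (c * x ^ (2 ^ (2 * m - 1) + 1)) ^ (2 ^ m))) :
    ∀ d : GaloisField 2 (2 * m), d ≠ 0 → ∀ β : GaloisField 2 (2 * m),
      {x : GaloisField 2 (2 * m) | f x + f (x + d) = β}.ncard ≤ 2 :=
  stmt_12_general m hm a b c ha hcb f hf
end

section
/- (Williams) Let n = 2m and a ∈ F_{2^n}^* with Tr^n_1(1/a^2) = 0, and let t_1 ∈ F_{2^n} be a solution of t^2 + a t + 1 = 0. Then the polynomial f(x) = x^3 + x + a has no zeros in F_{2^n} if and only if t_1 is not a cube in F_{2^n}, and f has three zeros in F_{2^n} if and only if t_1 is a cube in F_{2^n}. -/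
/-!
In characteristic 2 the substitution `y = β + β⁻¹` gives
`y ^ 3 + y + a = (β ^ 6 + a * β ^ 3 + 1) / β ^ 3`, so every cube root `β` of `t₁` yields a zero
`β + β⁻¹` of `x ^ 3 + x + a`. Conversely, each zero `y` arises this way from
`β = (t₁ + y) / (y + 1) ^ 2`. As `t₁ ≠ t₁⁻¹` (because `a ≠ 0`), the map `β ↦ β + β⁻¹` is injective on
the cube roots of `t₁`, and `F_{4^m}` contains a primitive cube root of unity, so `t₁` has either
no cube root or exactly three of them.
-/

open Polynomial

theorem IsPrimitiveRoot.ncard_setOf_pow_eq {R : Type*} [CommRing R] [IsDomain R] {n : ℕ}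
    (hn : 0 < n) {ζ : R} (hζ : IsPrimitiveRoot ζ n) {α : R} (hα : α ≠ 0) :
    {β : R | β ^ n = α ^ n}.ncard = n := by
  classical
  have hroots : {β : R | β ^ n = α ^ n} = (nthRootsFinset n (α ^ n) : Set R) := by
    ext β; simp [Polynomial.mem_nthRootsFinset hn]
  rw [hroots, Set.ncard_coe_finset, nthRootsFinset_def,
    Multiset.toFinset_card_of_nodup (hζ.nthRoots_nodup (pow_ne_zero n hα)),
    hζ.card_nthRoots, if_pos ⟨α, rfl⟩]

theorem FiniteField.exists_isPrimitiveRoot_of_dvd_card_sub_one {K : Type*} [Field K] [Finite K]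
    {p : ℕ} [Fact p.Prime] (hp : p ∣ Nat.card K - 1) : ∃ ζ : K, IsPrimitiveRoot ζ p := by
  have : Fintype Kˣ := Fintype.ofFinite _
  rw [← Nat.card_units, Nat.card_eq_fintype_card] at hp
  obtain ⟨ζ, hζ⟩ := exists_prime_orderOf_dvd_card p hp
  exact ⟨ζ, IsPrimitiveRoot.coe_units_iff.mpr (hζ ▸ IsPrimitiveRoot.orderOf ζ)⟩

theorem GaloisField.exists_isPrimitiveRoot_three {m : ℕ} (hm : m ≠ 0) :
    ∃ ζ : GaloisField 2 (2 * m), IsPrimitiveRoot ζ 3 := by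
  have : Fact (Nat.Prime 3) := ⟨Nat.prime_three⟩
  apply FiniteField.exists_isPrimitiveRoot_of_dvd_card_sub_one
  rw [GaloisField.card 2 (2 * m) (by omega)]
  exact Nat.pow_sub_one_dvd_pow_sub_one 2 (dvd_mul_right 2 m)

section CharTwo

variable {F : Type*} [Field F] {a t : F}

theorem ne_zero_of_sq_add_mul_add_one_eq_zero (ht : t ^ 2 + a * t + 1 = 0) : t ≠ 0 := by
  rintro rfl
  simp at ht

theorem ne_zero_of_pow_three_eq (ht : t ^ 2 + a * t + 1 = 0) {β : F} (hβ : β ^ 3 = t) : β ≠ 0 := by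
  rintro rfl
  exact ne_zero_of_sq_add_mul_add_one_eq_zero ht (by simpa [eq_comm] using hβ)

variable [CharP F 2]

theorem add_inv_eq_of_sq_add_mul_add_one_eq_zero (ht : t ^ 2 + a * t + 1 = 0) :
    t + t⁻¹ = a := by
  have ht0 := ne_zero_of_sq_add_mul_add_one_eq_zero ht
  field_simp
  linear_combination (norm := (ring_nf; reduce_mod_char!)) ht

theorem add_inv_pow_three_add_add_inv {β : F} (hβ : β ≠ 0) :
    (β + β⁻¹) ^ 3 + (β + β⁻¹) = β ^ 3 + (β ^ 3)⁻¹ := by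
  field_simp
  ring_nf
  reduce_mod_char!

theorem add_inv_pow_three_add_self_add_eq_zero (ht : t ^ 2 + a * t + 1 = 0) {β : F}
    (hβ : β ^ 3 = t) : (β + β⁻¹) ^ 3 + (β + β⁻¹) + a = 0 := by
  rw [add_inv_pow_three_add_add_inv (ne_zero_of_pow_three_eq ht hβ), hβ,
    add_inv_eq_of_sq_add_mul_add_one_eq_zero ht, CharTwo.add_self_eq_zero]

theorem exists_pow_three_eq_and_add_inv_eq (ha : a ≠ 0) (ht : t ^ 2 + a * t + 1 = 0) {y : F}
    (hy : y ^ 3 + y + a = 0) : ∃ β, β ^ 3 = t ∧ β + β⁻¹ = y := by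
  have hy1 : (y + 1) ^ 2 ≠ 0 := by
    refine pow_ne_zero 2 fun hy1 ↦ ha ?_
    linear_combination (norm := (ring_nf; reduce_mod_char!)) hy - (y ^ 2 + y) * hy1
  -- `β ^ 2 + y * β + 1 = 0` gives `β ^ 3 = (y + 1) ^ 2 * β + y`, which forces this `β`.
  obtain ⟨β, hβ⟩ : ∃ β, β * (y + 1) ^ 2 = t + y := ⟨_, div_mul_cancel₀ (t + y) hy1⟩
  have hquad : β ^ 2 + y * β + 1 = 0 := by
    refine (mul_eq_zero_iff_right (pow_ne_zero 2 hy1)).mp ?_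
    linear_combination (norm := (ring_nf; reduce_mod_char!))
      ht + t * hy + (β * (y + 1) ^ 2 + t + y + y * (y + 1) ^ 2) * hβ
  have hβ0 : β ≠ 0 := by rintro rfl; simp at hquad
  refine ⟨β, ?_, ?_⟩
  · linear_combination (norm := (ring_nf; reduce_mod_char!)) (β + y) * hquad + hβ
  · field_simp
    linear_combination (norm := (ring_nf; reduce_mod_char!)) hquad

theorem setOf_pow_three_add_self_add_eq_zero (ha : a ≠ 0) (ht : t ^ 2 + a * t + 1 = 0) :
    {y : F | y ^ 3 + y + a = 0} = (fun β ↦ β + β⁻¹) '' {β | β ^ 3 = t} := by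
  ext y
  constructor
  · intro hy
    obtain ⟨β, hβ, rfl⟩ := exists_pow_three_eq_and_add_inv_eq ha ht hy
    exact ⟨β, hβ, rfl⟩
  · rintro ⟨β, hβ, rfl⟩
    exact add_inv_pow_three_add_self_add_eq_zero ht hβ

theorem injOn_add_inv_setOf_pow_three_eq (ha : a ≠ 0) (ht : t ^ 2 + a * t + 1 = 0) :
    Set.InjOn (fun β ↦ β + β⁻¹) {β : F | β ^ 3 = t} := by
  intro β hβ γ hγ hβγ
  have hβ0 := ne_zero_of_pow_three_eq ht hβ
  have hγ0 := ne_zero_of_pow_three_eq ht hγ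
  have hprod : (β - γ) * (β * γ - 1) = 0 := by
    field_simp at hβγ
    linear_combination hβγ
  refine sub_eq_zero.mp ((mul_eq_zero.mp hprod).resolve_right fun h ↦ ha ?_)
  have ht1 : (t + 1) ^ 2 = 0 := by
    have : t ^ 2 = (β * γ) ^ 3 := by rw [mul_pow, hβ, hγ, sq]
    linear_combination (norm := (ring_nf; reduce_mod_char!))
      this + (β ^ 2 * γ ^ 2 + β * γ + 1) * h
  obtain rfl : t = 1 := by
    linear_combination (norm := (ring_nf; reduce_mod_char!)) pow_eq_zero_iff two_ne_zero |>.mp ht1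
  linear_combination (norm := (ring_nf; reduce_mod_char!)) ht

end CharTwo

theorem stmt_14_general (m : ℕ) (hm : 0 < m) (a : GaloisField 2 (2 * m)) (ha : a ≠ 0)
    (t₁ : GaloisField 2 (2 * m)) (ht₁ : t₁ ^ 2 + a * t₁ + 1 = 0) :
    ((¬ ∃ y : GaloisField 2 (2 * m), y ^ 3 + y + a = 0) ↔
        ¬ ∃ β : GaloisField 2 (2 * m), β ^ 3 = t₁) ∧
      (({y : GaloisField 2 (2 * m) | y ^ 3 + y + a = 0}.ncard = 3) ↔
        ∃ β : GaloisField 2 (2 * m), β ^ 3 = t₁) := by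
  have hroots := setOf_pow_three_add_self_add_eq_zero ha ht₁
  have hncard :
      {y : GaloisField 2 (2 * m) | y ^ 3 + y + a = 0}.ncard = {β | β ^ 3 = t₁}.ncard := by
    rw [hroots, (injOn_add_inv_setOf_pow_three_eq ha ht₁).ncard_image]
  refine ⟨not_congr ?_, fun h3 ↦ ?_, ?_⟩
  · exact (congrArg Set.Nonempty hroots).to_iff.trans Set.image_nonempty
  · exact Set.nonempty_of_ncard_ne_zero (by omega : {β | β ^ 3 = t₁}.ncard ≠ 0)
  · rintro ⟨β, rfl⟩
    obtain ⟨ζ, hζ⟩ := GaloisField.exists_isPrimitiveRoot_three hm.ne'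
    rw [hncard, hζ.ncard_setOf_pow_eq three_pos (ne_zero_of_pow_three_eq ht₁ rfl)]

theorem stmt_14 (m : ℕ) (hm : 0 < m) (a : GaloisField 2 (2 * m)) (ha : a ≠ 0)
    (htr : ∑ i ∈ Finset.range (2 * m), (1 / a ^ 2) ^ (2 ^ i) = 0)
    (t₁ : GaloisField 2 (2 * m)) (ht₁ : t₁ ^ 2 + a * t₁ + 1 = 0) :
    ((¬ ∃ y : GaloisField 2 (2 * m), y ^ 3 + y + a = 0) ↔
        ¬ ∃ β : GaloisField 2 (2 * m), β ^ 3 = t₁) ∧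
      (({y : GaloisField 2 (2 * m) | y ^ 3 + y + a = 0}.ncard = 3) ↔
        ∃ β : GaloisField 2 (2 * m), β ^ 3 = t₁) :=
  stmt_14_general m hm a ha t₁ ht₁
end

section
/- Let n = 2m with m odd, q = 2^m, and x ∈ F_{2^n} \ {0, 1}. Set h = x + x^q and c = x + x^2, and let A = c^{2-2q}(h + c + c^2), B = c + c^2. If c is a non-cube in F_{2^n}, then the equation A y^3 + B y^2 + B^q y + A^q = 0 has no solutions y ∈ F_{2^n}. -/
/-! Let `σ a = a ^ q`, an involution of `𝔽_{2^n}` fixing `h`, and `d = σ c = c + h + h²`.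
Since `2q ≡ 1 (mod 3)`, every `σ`-fixed `a` is a cube (`a = (a ^ (2q/3))³`); in particular so is
`c d`, and it suffices to show that `c⁵` is a cube. If `h = 0`, `c` itself is fixed; if
`h + c + c² = 0`, then `d = c⁴`. Otherwise, multiplying the cubic by `A²` and putting
`Z = A y + B` gives a depressed cubic `Z³ + P Z + R = 0` whose quadratic resolvent
`Ω² + R Ω + P³` vanishes at `Ω = c⁴ h³ / d` (by `A^{q+1} + B^{q+1} = h⁵`). In characteristic 2,
`(Ω + P Z)³ = Ω (Z² + P)³`, so `Ω` is a cube, and so is `Ω · c d / h³ = c⁵`. -/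

theorem exists_cube_of_pow_eq_self {M : Type*} [MonoidWithZero M] [IsCancelMulZero M] {a : M} {q : ℕ}
    (hq : 2 * q % 3 = 1) (ha : a ^ q = a) : ∃ β, β ^ 3 = a := by
  rcases eq_or_ne a 0 with rfl | ha0
  · exact ⟨0, by simp⟩
  refine ⟨a ^ (2 * q / 3), mul_right_cancel₀ ha0 ?_⟩
  calc (a ^ (2 * q / 3)) ^ 3 * a = a ^ (3 * (2 * q / 3) + 2 * q % 3) := by
        rw [hq, pow_succ a, pow_mul']
    _ = a * a := by rw [Nat.div_add_mod, pow_mul', ha, sq]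

theorem exists_cube_of_pow_five {K : Type*} [Field K] {c : K} (h : ∃ s, s ^ 3 = c ^ 5) :
    ∃ β, β ^ 3 = c := by
  obtain ⟨s, hs⟩ := h
  rcases eq_or_ne c 0 with rfl | hc
  · exact ⟨0, by simp⟩
  refine ⟨c ^ 2 / s, ?_⟩
  rw [div_pow, hs]
  field_simp

theorem two_mul_two_pow_mod_three {m : ℕ} (hm : Odd m) : 2 * 2 ^ m % 3 = 1 := by
  obtain ⟨k, rfl⟩ := hm
  rw [← pow_succ', show 2 * k + 1 + 1 = 2 * (k + 1) by ring, pow_mul, Nat.pow_mod]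
  simp

theorem GaloisField.pow_pow_eq_self_of_two_mul {p m : ℕ} [Fact p.Prime] (hm : m ≠ 0)
    (a : GaloisField p (2 * m)) : (a ^ p ^ m) ^ p ^ m = a := by
  have : Fintype (GaloisField p (2 * m)) := Fintype.ofFinite _
  rw [← pow_mul, ← pow_add, ← two_mul, ← GaloisField.card p (2 * m) (by positivity),
    Nat.card_eq_fintype_card, FiniteField.pow_card]

section CharTwo

variable {K : Type*} [Field K] [CharP K 2]

theorem exists_cube_of_cubic_root_of_resolvent {a b b' a' y Ω : K}
    (hy : a * y ^ 3 + b * y ^ 2 + b' * y + a' = 0)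
    (hΩ : Ω ^ 2 + a * (a * a' + b * b') * Ω + (b ^ 2 + a * b') ^ 3 = 0)
    (hR : a * (a * a' + b * b') ≠ 0) : ∃ ρ, ρ ^ 3 = Ω := by
  set P := b ^ 2 + a * b'
  set R := a * (a * a' + b * b')
  set Z := a * y + b
  have hZ : Z ^ 3 + P * Z + R = 0 := by
    linear_combination (norm := grind) a ^ 2 * hy
  have hZP : Z ^ 2 + P ≠ 0 := fun h0 => hR (by linear_combination (norm := grind) hZ - Z * h0)
  refine ⟨(Ω + P * Z) / (Z ^ 2 + P), ?_⟩
  have key : (Ω + P * Z) ^ 3 = Ω * (Z ^ 2 + P) ^ 3 := by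
    linear_combination (norm := grind) (Ω + R + P * Z) * hΩ + (P ^ 3 + Ω * Z ^ 3 + Ω * R) * hZ
  rw [div_pow, key, mul_div_cancel_right₀ _ (pow_ne_zero 3 hZP)]

theorem exists_cube_eq_resolvent_root {c h d A A' y : K} (hd : d = c + h + h ^ 2)
    (hc : c ≠ 0) (hd0 : d ≠ 0) (hh : h ≠ 0) (hX : h + c + c ^ 2 ≠ 0)
    (hA : A = c ^ 2 / d ^ 2 * (h + c + c ^ 2)) (hA' : A' = d ^ 2 / c ^ 2 * (h + d + d ^ 2))
    (hy : A * y ^ 3 + (c + c ^ 2) * y ^ 2 + (d + d ^ 2) * y + A' = 0) :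
    ∃ ρ, ρ ^ 3 = c ^ 4 * h ^ 3 / d := by
  have hnorm : A * A' + (c + c ^ 2) * (d + d ^ 2) = h ^ 5 := by
    rw [hA, hA']
    field_simp
    subst hd
    grind
  refine exists_cube_of_cubic_root_of_resolvent hy ?_ ?_
  · rw [hnorm, hA]
    field_simp
    subst hd
    grind
  · rw [hnorm, hA]
    exact mul_ne_zero (mul_ne_zero (by positivity) hX) (pow_ne_zero 5 hh)

theorem exists_cube_of_conj_root (σ : K →+* K) (hσ : ∀ a, σ (σ a) = a)
    (hfix : ∀ a, σ a = a → ∃ β, β ^ 3 = a) {x c h y : K} (hx0 : x ≠ 0) (hx1 : x ≠ 1)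
    (hc : c = x + x ^ 2) (hh : h = x + σ x)
    (hy : c ^ 2 / σ c ^ 2 * (h + c + c ^ 2) * y ^ 3 + (c + c ^ 2) * y ^ 2 + σ (c + c ^ 2) * y
      + σ (c ^ 2 / σ c ^ 2 * (h + c + c ^ 2)) = 0) :
    ∃ β, β ^ 3 = c := by
  have hσx : σ x = x + h := by rw [hh]; grind
  have hσc : σ c = c + h + h ^ 2 := by rw [hc, map_add, map_pow, hσx]; grind
  have hσh : σ h = h := by rw [hh, map_add, hσ, add_comm]
  have hc0 : c ≠ 0 := by rw [hc]; grind
  have hσc0 : σ c ≠ 0 := (map_ne_zero σ).mpr hc0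
  have hcσc : ∃ s, s ^ 3 = c * σ c := hfix _ (by rw [map_mul, hσ, mul_comm])
  by_cases hh0 : h = 0
  · exact hfix c (by rw [hσc, hh0]; ring)
  by_cases hX : h + c + c ^ 2 = 0
  · have hσc4 : σ c = c ^ 4 := by rw [hσc]; grind
    exact exists_cube_of_pow_five (by rwa [hσc4, ← pow_succ'] at hcσc)
  simp only [map_add, map_mul, map_div₀, map_pow, hσ, hσh] at hy
  obtain ⟨ρ, hρ⟩ := exists_cube_eq_resolvent_root hσc hc0 hσc0 hh0 hX rfl rfl hy
  obtain ⟨s, hs⟩ := hcσc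
  refine exists_cube_of_pow_five ⟨ρ * s / h, ?_⟩
  rw [div_pow, mul_pow, hρ, hs]
  field_simp

end CharTwo

theorem stmt_15_general (m : ℕ) (hodd : Odd m)
    (x : GaloisField 2 (2 * m)) (hx0 : x ≠ 0) (hx1 : x ≠ 1) :
    let q := 2 ^ m
    let h := x + x ^ q
    let c := x + x ^ 2
    let A := c ^ 2 / c ^ (2 * q) * (h + c + c ^ 2)
    let B := c + c ^ 2
    (¬ ∃ β : GaloisField 2 (2 * m), β ^ 3 = c) →
      ∀ y : GaloisField 2 (2 * m),
        A * y ^ 3 + B * y ^ 2 + B ^ q * y + A ^ q ≠ 0 := by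
  intro q h c A B hnc y hy
  let σ := iterateFrobenius (GaloisField 2 (2 * m)) 2 m
  have hσ (a) : σ a = a ^ q := iterateFrobenius_def 2 m a
  have hσσ (a) : σ (σ a) = a := by
    rw [hσ, hσ]
    exact GaloisField.pow_pow_eq_self_of_two_mul hodd.pos.ne' a
  have hfix (a) (ha : σ a = a) : ∃ β, β ^ 3 = a :=
    exists_cube_of_pow_eq_self (two_mul_two_pow_mod_three hodd) ((hσ a).symm.trans ha)
  refine hnc (exists_cube_of_conj_root σ hσσ hfix (h := h) (y := y) hx0 hx1 rfl (by rw [hσ]) ?_)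
  simp only [hσ]
  rwa [← pow_mul']

theorem stmt_15 (m : ℕ) (hm : 0 < m) (hodd : Odd m)
    (x : GaloisField 2 (2 * m)) (hx0 : x ≠ 0) (hx1 : x ≠ 1) :
    let q := 2 ^ m
    let h := x + x ^ q
    let c := x + x ^ 2
    let A := c ^ 2 / c ^ (2 * q) * (h + c + c ^ 2)
    let B := c + c ^ 2
    (¬ ∃ β : GaloisField 2 (2 * m), β ^ 3 = c) →
      ∀ y : GaloisField 2 (2 * m),
        A * y ^ 3 + B * y ^ 2 + B ^ q * y + A ^ q ≠ 0 :=
  stmt_15_general m hodd x hx0 hx1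
end

section
/- Let n = 2m with m odd, q = 2^m, and x ∈ F_{2^n} \ {0, 1}. Set h = x + x^q, c = x + x^2, A = (h + c + c^2)/c^q, B = 1 + c. If c is a non-cube in F_{2^n}, then the equation A y^3 + B y^2 + B^q y + A^q = 0 has no solutions y ∈ F_{2^n}. -/
/-!
Write `s = x ^ q`, so that `c ^ q = s + s ^ 2`, `h = x + s` is fixed by Frobenius and
`c + c ^ q = h + h ^ 2`. After clearing denominators, the substitution
`V = c ((h + c + c ^ 2) y + (1 + c) c ^ q)` turns the equation into a depressed cubic
`V ^ 3 + P V + R = 0`, whose quadratic resolvent `Z ^ 2 + R Z + P ^ 3 = 0` has the explicit root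
`Z = c ^ 4 c ^ (2q) h ^ 3`. In characteristic 2 the element `z = (Z + P V) / (V ^ 2 + P)` of the
field satisfies `z ^ 3 = Z`. Since `3 ∣ q + 1`, `c ^ (q + 1)` is a cube, and
`Z = c ^ 3 h ^ 3 (c ^ (q + 1)) ^ 2 / c`, so `c` is a cube.

The degenerate cases are `h = 0`, where `c ^ 2 = c ^ (q + 1)` is a cube, and
`h + c + c ^ 2 = s + x ^ 4 = 0`, which forces `x ^ 16 = x`, hence `x ∈ 𝔽₁₆ ∩ 𝔽_{2^n} = 𝔽₄`
and `h = 0`.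
-/

open Function

theorem three_dvd_two_pow_add_one {m : ℕ} (hm : Odd m) : 3 ∣ 2 ^ m + 1 := by
  simpa using Odd.nat_add_dvd_pow_add_pow 2 1 hm

theorem pow_pow_gcd_eq_self {M : Type*} [Monoid M] {k a b : ℕ} {x : M}
    (ha : x ^ k ^ a = x) (hb : x ^ k ^ b = x) : x ^ k ^ Nat.gcd a b = x := by
  have periodic_iff (n : ℕ) : IsPeriodicPt (· ^ k : M → M) n x ↔ x ^ k ^ n = x := by
    rw [IsPeriodicPt, IsFixedPt, pow_iterate]
  exact (periodic_iff _).1 (((periodic_iff a).2 ha).gcd ((periodic_iff b).2 hb))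

theorem pow_two_pow_eq_self_of_eq_pow_four {M : Type*} [Monoid M] {m : ℕ} (hm : Odd m) {x : M}
    (hx : x ^ 2 ^ (2 * m) = x) (h4 : x ^ 2 ^ m = x ^ 4) : x ^ 2 ^ m = x := by
  have h16 : x ^ 2 ^ 4 = x :=
    calc x ^ 2 ^ 4 = (x ^ 4) ^ 4 := by rw [← pow_mul]; rfl
      _ = (x ^ 2 ^ m) ^ 4 := by rw [h4]
      _ = (x ^ 4) ^ 2 ^ m := pow_right_comm ..
      _ = (x ^ 2 ^ m) ^ 2 ^ m := by rw [h4]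
      _ = x ^ 2 ^ (2 * m) := by rw [← pow_mul, ← pow_add, two_mul]
      _ = x := hx
  have hgcd : Nat.gcd 4 (2 * m) = 2 := by
    rw [show 4 = 2 * 2 from rfl, Nat.gcd_mul_left, Nat.coprime_two_left.2 hm]
  have h2 := pow_pow_gcd_eq_self h16 hx
  rw [hgcd] at h2
  exact h4.trans h2

theorem GaloisField.pow_char_pow_eq_self {p n : ℕ} [Fact p.Prime] (hn : n ≠ 0)
    (a : GaloisField p n) : a ^ p ^ n = a := by
  have := Fintype.ofFinite (GaloisField p n)
  rw [← GaloisField.card p n hn, Nat.card_eq_fintype_card]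
  exact FiniteField.pow_card a

theorem exists_cube_of_mul_self_eq_cube {K : Type*} [Field K] {c κ : K} (hc : c ≠ 0)
    (hκ : κ ^ 3 = c * c) : ∃ β, β ^ 3 = c :=
  ⟨c / κ, by rw [div_pow, hκ]; field_simp⟩

section CharTwo

variable {K : Type*} [Field K] [CharP K 2]

theorem cube_eq_of_cubic_of_resolvent {P R V Z : K} (hR : R ≠ 0)
    (hV : V ^ 3 + P * V + R = 0) (hZ : Z ^ 2 + R * Z + P ^ 3 = 0) :
    ((Z + P * V) / (V ^ 2 + P)) ^ 3 = Z := by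
  have hD : V ^ 2 + P ≠ 0 := fun hD => hR (by linear_combination hV - V * hD)
  set z := (Z + P * V) / (V ^ 2 + P)
  have hzD : (V ^ 2 + P) * z = Z + P * V := mul_div_cancel₀ _ hD
  have hquad : z ^ 2 + V * z + P = 0 := by
    refine (mul_eq_zero.1 ?_).resolve_left (pow_ne_zero 2 hD)
    linear_combination (norm := ring_nf)
      Z * hV + hZ + ((V ^ 2 + P) * z + (Z + P * V) + V * (V ^ 2 + P)) * hzD
    reduce_mod_char!
  linear_combination (norm := ring_nf) (z - V) * hquad + hzD
  reduce_mod_char!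

theorem exists_cube_eq_of_root {c d h y : K} (hcd : c + d = h + h ^ 2) (hc : c ≠ 0) (hd : d ≠ 0)
    (hh : h ≠ 0) (he : h + c + c ^ 2 ≠ 0)
    (hy : (h + c + c ^ 2) / d * y ^ 3 + (1 + c) * y ^ 2 + (1 + d) * y + (h + d + d ^ 2) / c = 0) :
    ∃ z, z ^ 3 = c ^ 4 * d ^ 2 * h ^ 3 := by
  have hE : c * (h + c + c ^ 2) * y ^ 3 + (1 + c) * c * d * y ^ 2 + (1 + d) * c * d * y
      + d * (h + d + d ^ 2) = 0 := by
    field_simp at hy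
    linear_combination hy
  obtain rfl : d = c + h + h ^ 2 := by linear_combination hcd - c * CharTwo.two_eq_zero (R := K)
  have hR : c ^ 2 * (h + c + c ^ 2) * (c + h + h ^ 2) * h ^ 5 ≠ 0 := by simp [*]
  refine ⟨_, cube_eq_of_cubic_of_resolvent hR
    (V := c * ((h + c + c ^ 2) * y + (1 + c) * (c + h + h ^ 2)))
    (P := c ^ 2 * (c + h + h ^ 2) * (h + c) * h ^ 2) ?_ ?_⟩
  · linear_combination (norm := ring_nf) (c ^ 2 * (h + c + c ^ 2) ^ 2) * hE
    reduce_mod_char!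
  · ring_nf
    reduce_mod_char!

theorem exists_cube_of_root_of_involutive {σ : K →+* K} (hσ : Involutive σ) {c h y κ : K}
    (hσh : σ h = h) (hch : c + σ c = h + h ^ 2) (hc : c ≠ 0) (hh : h ≠ 0)
    (he : h + c + c ^ 2 ≠ 0) (hκ : κ ^ 3 = c * σ c)
    (hy : (h + c + c ^ 2) / σ c * y ^ 3 + (1 + c) * y ^ 2 + σ (1 + c) * y
      + σ ((h + c + c ^ 2) / σ c) = 0) :
    ∃ β, β ^ 3 = c := by
  have hd : σ c ≠ 0 := (map_ne_zero σ).2 hc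
  simp only [map_div₀, map_add, map_pow, map_one, hσ c, hσh] at hy
  obtain ⟨z, hz⟩ := exists_cube_eq_of_root hch hc hd hh he hy
  have hz0 : z ≠ 0 := by
    rintro rfl
    simp [hc, hd, hh] at hz
  refine ⟨c * h * κ ^ 2 / z, ?_⟩
  rw [div_pow, mul_pow, mul_pow, ← pow_mul, mul_comm 2 3, pow_mul, hκ, hz]
  field_simp

end CharTwo

theorem stmt_16_general (m : ℕ) (hodd : Odd m)
    (x : GaloisField 2 (2 * m)) (hx0 : x ≠ 0) (hx1 : x ≠ 1) :
    let q := 2 ^ m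
    let h := x + x ^ q
    let c := x + x ^ 2
    let A := (h + c + c ^ 2) / c ^ q
    let B := 1 + c
    (¬ ∃ β : GaloisField 2 (2 * m), β ^ 3 = c) →
      ∀ y : GaloisField 2 (2 * m),
        A * y ^ 3 + B * y ^ 2 + B ^ q * y + A ^ q ≠ 0 := by
  intro q h c A B hnc y hy
  apply hnc
  have hfix (a : GaloisField 2 (2 * m)) : a ^ 2 ^ (2 * m) = a :=
    GaloisField.pow_char_pow_eq_self (by simp [hodd.pos.ne']) a
  set φ := iterateFrobenius (GaloisField 2 (2 * m)) 2 m
  have hφ : Involutive φ := fun a => by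
    rw [iterateFrobenius_def, iterateFrobenius_def, ← pow_mul, ← pow_add, ← two_mul, hfix]
  have hc : c ≠ 0 := by
    rw [show c = x * (1 + x) by ring]
    exact mul_ne_zero hx0 fun h1 => hx1 (CharTwo.add_eq_zero.1 h1).symm
  obtain ⟨κ, hκ⟩ : ∃ κ, κ ^ 3 = c * φ c := by
    obtain ⟨t, ht⟩ := three_dvd_two_pow_add_one hodd
    exact ⟨c ^ t, by rw [← pow_mul, mul_comm t 3, ← ht, pow_succ']; rfl⟩
  by_cases hh : h = 0
  · have hφx : φ x = x := (CharTwo.add_eq_zero.1 hh).symm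
    have hφc : φ c = c := by simp only [c, map_add, map_pow, hφx]
    exact exists_cube_of_mul_self_eq_cube hc (hφc ▸ hκ)
  have hφh : φ h = h := by
    change φ (x + φ x) = x + φ x
    rw [map_add, hφ, add_comm]
  have hch : c + φ c = h + h ^ 2 := by
    change x + x ^ 2 + φ (x + x ^ 2) = x + φ x + (x + φ x) ^ 2
    rw [map_add, map_pow]
    linear_combination (-(x * φ x)) * CharTwo.two_eq_zero (R := GaloisField 2 (2 * m))
  have he : h + c + c ^ 2 ≠ 0 := by
    intro he0
    have hx4 : φ x = x ^ 4 := CharTwo.add_eq_zero.1 <| by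
      change x + φ x + (x + x ^ 2) + (x + x ^ 2) ^ 2 = 0 at he0
      linear_combination
        he0 - (x + x ^ 2 + x ^ 3) * CharTwo.two_eq_zero (R := GaloisField 2 (2 * m))
    exact hh (CharTwo.add_eq_zero.2 (pow_two_pow_eq_self_of_eq_pow_four hodd (hfix x) hx4).symm)
  exact exists_cube_of_root_of_involutive hφ hφh hch hc hh he hκ hy

theorem stmt_16 (m : ℕ) (hm : 0 < m) (hodd : Odd m)
    (x : GaloisField 2 (2 * m)) (hx0 : x ≠ 0) (hx1 : x ≠ 1) :
    let q := 2 ^ m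
    let h := x + x ^ q
    let c := x + x ^ 2
    let A := (h + c + c ^ 2) / c ^ q
    let B := 1 + c
    (¬ ∃ β : GaloisField 2 (2 * m), β ^ 3 = c) →
      ∀ y : GaloisField 2 (2 * m),
        A * y ^ 3 + B * y ^ 2 + B ^ q * y + A ^ q ≠ 0 :=
  stmt_16_general m hodd x hx0 hx1
end

section
/- Let n = 2m with m odd, q = 2^m, a ∈ F_{2^n} \ F_{2^m}, and b a non-cube in F_{2^n}. Then h(x) = a·Tr^n_m(b x^3) + a^q·Tr^n_m(b x^5 + b x^{4q+1}) is an APN function over F_{2^n}. -/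
/-!
The map `σ x = x ^ q` is an involutive automorphism of `F_{2^n}` with fixed field `F_q`, and `h`
is quadratic: `h (x + y) = h x + h y + B x y` with `B` additive in `x`. So the solutions of
`h x + h (x + d) = β` form a coset of the kernel of `B · d`, and it suffices to show that
`B z d = 0` forces `z ∈ {0, d}`. Since `a` and `a ^ q` are linearly independent over `F_q`,
`B z d = 0` amounts to two trace conditions. For `d ∈ F_q` they give `z ∈ F_q` and then
`z (z + d) = 0`. Otherwise write `z = s + t d` with `s, t ∈ F_q`; eliminating `s` leaves either
`t ∈ {0, 1}` and `s = 0`, or a root `c ∈ F_q` of `X ^ 3 + N X + N Tr(b)`, `N = b ^ (q + 1)`.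
Writing `c = v + N / v`, which is possible since Artin–Schreier equations over `F_q` are solvable
in `F_{q^2}`, gives `v ^ 3 ∈ {b ^ (q + 2), b ^ (2q + 1)}`; as `3 ∣ q + 1`, `b` would be a cube.
-/

open Finset Function

lemma ncard_le_two_of_forall_sub_eq {G : Type*} [AddGroup G] {S : Set G} {d : G}
    (h : ∀ x ∈ S, ∀ y ∈ S, x - y = 0 ∨ x - y = d) : S.ncard ≤ 2 := by
  obtain rfl | ⟨y, hy⟩ := S.eq_empty_or_nonempty
  · simp
  calc S.ncard ≤ ({y, d + y} : Set G).ncard := Set.ncard_le_ncard (fun x hx => ?_)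
    _ ≤ 2 := (Set.ncard_insert_le _ _).trans (by simp)
  rcases h x hx y hy with h | h
  · exact .inl (sub_eq_zero.mp h)
  · exact .inr (sub_eq_iff_eq_add.mp h)

section Involution

variable {F : Type*} [Field F] (σ : F →+* F)

/-- `Tr^n_m`, with `σ` in the role of `x ↦ x ^ q`. -/
def relTrace (x : F) : F := x + σ x

lemma relTrace_add (x y : F) : relTrace σ (x + y) = relTrace σ x + relTrace σ y := by
  simp only [relTrace, map_add]
  ring

lemma relTrace_mul_of_map_eq {r : F} (hr : σ r = r) (x : F) :
    relTrace σ (r * x) = r * relTrace σ x := by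
  simp only [relTrace, map_mul, hr]
  ring

lemma map_relTrace {σ : F →+* F} (hσ : Involutive σ) (x : F) :
    σ (relTrace σ x) = relTrace σ x := by
  rw [relTrace, map_add, hσ x, add_comm]

variable [CharP F 2]

lemma relTrace_ne_zero {x : F} (hx : σ x ≠ x) : relTrace σ x ≠ 0 :=
  fun h => hx (CharTwo.add_eq_zero.mp h).symm

/-- The function `h`, with `x ^ (4q + 1)` written as `σ x ^ 4 * x`. -/
def apnFun (a b x : F) : F :=
  a * relTrace σ (b * x ^ 3) + σ a * relTrace σ (b * x ^ 5 + b * σ x ^ 4 * x)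

def apnPolar (a b x y : F) : F :=
  a * relTrace σ (b * (x ^ 2 * y + x * y ^ 2)) +
    σ a * relTrace σ (b * (x ^ 4 * y + x * y ^ 4 + σ x ^ 4 * y + x * σ y ^ 4))

lemma apnFun_add (a b x y : F) :
    apnFun σ a b (x + y) = apnFun σ a b x + apnFun σ a b y + apnPolar σ a b x y := by
  simp only [apnFun, apnPolar, relTrace, map_add, map_mul, map_pow]
  linear_combination (norm := (ring_nf; reduce_mod_char!))

lemma apnPolar_add_left (a b x x' y : F) :
    apnPolar σ a b (x + x') y = apnPolar σ a b x y + apnPolar σ a b x' y := by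
  simp only [apnPolar, relTrace, map_add, map_mul, map_pow]
  linear_combination (norm := (ring_nf; reduce_mod_char!))

lemma apnFun_add_apnFun_add (a b x d : F) :
    apnFun σ a b x + apnFun σ a b (x + d) = apnFun σ a b d + apnPolar σ a b x d := by
  rw [apnFun_add, add_assoc, CharTwo.add_cancel_left]

-- Eliminating `s` from the trace conditions for `z = s + t d`, where `b' = σ b`, `d' = σ d`.
lemma mul_cubic_eq_zero {b b' d d' s t : F}
    (hI : s * (b + b') = (t ^ 4 + t) * (b * d + b' * d'))
    (hII : s ^ 2 * (b * d + b' * d') + s * (b * d ^ 2 + b' * d' ^ 2) +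
      (t ^ 2 + t) * (b * d ^ 3 + b' * d' ^ 3) = 0) :
    (t ^ 2 + t) * (((b * d + b' * d') * (t ^ 2 + t)) ^ 3 +
      b * b' * (d + d') ^ 2 * ((b * d + b' * d') * (t ^ 2 + t)) +
      b * b' * (b + b') * (d + d') ^ 3) = 0 := by
  linear_combination (norm := (ring_nf; reduce_mod_char!)) (b + b') ^ 2 * hII +
    ((s * (b + b') + (t ^ 4 + t) * (b * d + b' * d')) * (b * d + b' * d') +
      (b * d + b' * d') ^ 2 + b * b' * (d + d') ^ 2) * hI

variable {σ} (hσ : Involutive σ)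
include hσ

lemma eq_zero_of_mul_add_map_mul_eq_zero_s19 {a r s : F} (ha : σ a ≠ a) (hr : σ r = r)
    (hs : σ s = s) (h : a * r + σ a * s = 0) : r = 0 ∧ s = 0 := by
  have hconj : σ a * r + a * s = 0 := by simpa [hr, hs, hσ a] using congrArg σ h
  have hrs : (r + s) * relTrace σ a = 0 := by
    rw [relTrace]
    linear_combination h + hconj
  have hr_eq : r = s := CharTwo.add_eq_zero.mp
    ((mul_eq_zero.mp hrs).resolve_right (relTrace_ne_zero σ ha))
  subst hr_eq
  have hr0 : r * relTrace σ a = 0 := by rw [relTrace]; linear_combination h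
  have hr_zero : r = 0 := (mul_eq_zero.mp hr0).resolve_right (relTrace_ne_zero σ ha)
  exact ⟨hr_zero, hr_zero⟩

lemma exists_map_eq_add_map_eq_mul {d : F} (hd : σ d ≠ d) (z : F) :
    ∃ s t, σ s = s ∧ σ t = t ∧ z = s + t * d := by
  have he := relTrace_ne_zero σ hd
  refine ⟨z + relTrace σ z / relTrace σ d * d, relTrace σ z / relTrace σ d, ?_, ?_, ?_⟩
  · rw [map_add, map_mul, map_div₀, map_relTrace hσ, map_relTrace hσ]
    field_simp
    simp only [relTrace]
    linear_combination (norm := (ring_nf; reduce_mod_char!))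
  · rw [map_div₀, map_relTrace hσ, map_relTrace hσ]
  · linear_combination (norm := (ring_nf; reduce_mod_char!))

variable {b d z : F}

lemma eq_zero_or_eq_of_map_eq_self (hb : σ b ≠ b) (hd : d ≠ 0) (hdσ : σ d = d)
    (hP : relTrace σ (b * (z ^ 2 * d + z * d ^ 2)) = 0)
    (hQ : relTrace σ (b * (z ^ 4 * d + z * d ^ 4 + σ z ^ 4 * d + z * σ d ^ 4)) = 0) :
    z = 0 ∨ z = d := by
  have hβ := relTrace_ne_zero σ hb
  have hzσ : σ z = z := by
    have hQ' : b * (z ^ 4 * d + z * d ^ 4 + σ z ^ 4 * d + z * σ d ^ 4) =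
        (relTrace σ z ^ 4 * d) * b := by
      rw [hdσ, relTrace]
      linear_combination (norm := (ring_nf; reduce_mod_char!))
    rw [hQ', relTrace_mul_of_map_eq σ (by rw [map_mul, map_pow, map_relTrace hσ, hdσ])] at hQ
    have := (mul_eq_zero.mp hQ).resolve_right hβ
    exact (CharTwo.add_eq_zero.mp (pow_eq_zero_iff four_ne_zero |>.mp
      ((mul_eq_zero.mp this).resolve_right hd))).symm
  have hP' : b * (z ^ 2 * d + z * d ^ 2) = (z * d * (z + d)) * b := by ring
  rw [hP', relTrace_mul_of_map_eq σ (by simp [hzσ, hdσ])] at hP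
  rcases mul_eq_zero.mp ((mul_eq_zero.mp hP).resolve_right hβ) with h | h
  · exact .inl ((mul_eq_zero.mp h).resolve_right hd)
  · exact .inr (CharTwo.add_eq_zero.mp h)

-- With `v ^ 2 + c v = N`, i.e. `c = v + N / v`, the cubic equals
-- `(v ^ 3 + N b) (v ^ 3 + N σ b) / v ^ 3`.
lemma cubic_ne_zero_of_map_eq_self (hAS : ∀ c, σ c = c → ∃ u, u ^ 2 + u = c)
    (hb : σ b ≠ b) (hb₁ : ¬∃ v, v ^ 3 = b ^ 2 * σ b) (hb₂ : ¬∃ v, v ^ 3 = b * σ b ^ 2)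
    {c : F} (hc : σ c = c) :
    c ^ 3 + b * σ b * c + b * σ b * (b + σ b) ≠ 0 := by
  intro h
  have hb0 : b ≠ 0 := by rintro rfl; simp at hb
  have hN : b * σ b ≠ 0 := mul_ne_zero hb0 ((map_ne_zero σ).mpr hb0)
  have hc0 : c ≠ 0 := by
    rintro rfl
    exact mul_ne_zero hN (relTrace_ne_zero σ hb) (by simpa [relTrace] using h)
  obtain ⟨u, hu⟩ :=
    hAS (b * σ b / c ^ 2) (by rw [map_div₀, map_mul, map_pow, hσ b, hc, mul_comm])
  have hv : (c * u) ^ 2 + c * (c * u) = b * σ b := by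
    field_simp at hu
    linear_combination hu
  have hfactor : ((c * u) ^ 3 + b * σ b * b) * ((c * u) ^ 3 + b * σ b * σ b) =
      (c * u) ^ 3 * (c ^ 3 + b * σ b * c + b * σ b * (b + σ b)) := by
    linear_combination (norm := (ring_nf; reduce_mod_char!))
      ((c * u) ^ 4 + c * (c * u) ^ 3 + b * σ b * (c * u) ^ 2 + c ^ 2 * (c * u) ^ 2 +
        b * σ b * c * (c * u) + b ^ 2 * σ b ^ 2) * hv
  rw [h, mul_zero] at hfactor
  rcases mul_eq_zero.mp hfactor with h₁ | h₂
  · exact hb₁ ⟨c * u, by rw [CharTwo.add_eq_zero.mp h₁]; ring⟩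
  · exact hb₂ ⟨c * u, by rw [CharTwo.add_eq_zero.mp h₂]; ring⟩

lemma eq_zero_or_eq_of_map_ne_self (hAS : ∀ c, σ c = c → ∃ u, u ^ 2 + u = c) (hb : σ b ≠ b)
    (hb₁ : ¬∃ v, v ^ 3 = b ^ 2 * σ b) (hb₂ : ¬∃ v, v ^ 3 = b * σ b ^ 2) (hdσ : σ d ≠ d)
    (hP : relTrace σ (b * (z ^ 2 * d + z * d ^ 2)) = 0)
    (hQ : relTrace σ (b * (z ^ 4 * d + z * d ^ 4 + σ z ^ 4 * d + z * σ d ^ 4)) = 0) :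
    z = 0 ∨ z = d := by
  obtain ⟨s, t, hs, ht, rfl⟩ := exists_map_eq_add_map_eq_mul hσ hdσ z
  have hσz : σ (s + t * d) = s + t * σ d := by rw [map_add, map_mul, hs, ht]
  have he := relTrace_ne_zero σ hdσ
  have hI : s * relTrace σ b = (t ^ 4 + t) * relTrace σ (b * d) := by
    have hQ' : b * ((s + t * d) ^ 4 * d + (s + t * d) * d ^ 4 + σ (s + t * d) ^ 4 * d +
        (s + t * d) * σ d ^ 4) = relTrace σ d ^ 4 * (s * b + (t ^ 4 + t) * (b * d)) := by
      rw [hσz, relTrace]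
      linear_combination (norm := (ring_nf; reduce_mod_char!))
    rw [hQ', relTrace_mul_of_map_eq σ (by rw [map_pow, map_relTrace hσ]), relTrace_add,
      relTrace_mul_of_map_eq σ hs,
      relTrace_mul_of_map_eq σ (r := t ^ 4 + t) (by simp [ht])] at hQ
    exact CharTwo.add_eq_zero.mp ((mul_eq_zero.mp hQ).resolve_left (pow_ne_zero 4 he))
  have hII : s ^ 2 * relTrace σ (b * d) + s * relTrace σ (b * d ^ 2) +
      (t ^ 2 + t) * relTrace σ (b * d ^ 3) = 0 := by
    have hP' : b * ((s + t * d) ^ 2 * d + (s + t * d) * d ^ 2) =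
        s ^ 2 * (b * d) + s * (b * d ^ 2) + (t ^ 2 + t) * (b * d ^ 3) := by
      linear_combination (norm := (ring_nf; reduce_mod_char!))
    rwa [hP', relTrace_add, relTrace_add,
      relTrace_mul_of_map_eq σ (r := s ^ 2) (by simp [hs]), relTrace_mul_of_map_eq σ hs,
      relTrace_mul_of_map_eq σ (r := t ^ 2 + t) (by simp [ht])] at hP
  simp only [relTrace, map_mul, map_pow] at hI hII he
  rcases mul_eq_zero.mp (mul_cubic_eq_zero hI hII) with hw | hcubic
  · have hs0 : s = 0 := by
      have : s * (b + σ b) = 0 := by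
        rw [hI, show t ^ 4 + t = (t ^ 2 + t) ^ 2 + (t ^ 2 + t) by
          linear_combination (norm := (ring_nf; reduce_mod_char!)), hw]
        ring
      exact (mul_eq_zero.mp this).resolve_right (relTrace_ne_zero σ hb)
    have ht01 : t * (t + 1) = 0 := by linear_combination hw
    rcases mul_eq_zero.mp ht01 with h | h
    · exact .inl (by rw [hs0, h]; ring)
    · exact .inr (by rw [hs0, CharTwo.add_eq_zero.mp h]; ring)
  · refine (cubic_ne_zero_of_map_eq_self hσ hAS hb hb₁ hb₂
      (c := (b * d + σ b * σ d) * (t ^ 2 + t) / (d + σ d)) ?_ ?_).elim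
    · simp only [map_div₀, map_mul, map_add, map_pow, hσ b, hσ d, ht]
      ring
    · field_simp
      linear_combination hcubic

variable {a : F}

lemma eq_zero_or_eq_of_apnPolar_eq_zero (hAS : ∀ c, σ c = c → ∃ u, u ^ 2 + u = c)
    (ha : σ a ≠ a) (hb : σ b ≠ b) (hb₁ : ¬∃ v, v ^ 3 = b ^ 2 * σ b)
    (hb₂ : ¬∃ v, v ^ 3 = b * σ b ^ 2) (hd : d ≠ 0) (h : apnPolar σ a b z d = 0) :
    z = 0 ∨ z = d := by
  obtain ⟨hP, hQ⟩ :=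
    eq_zero_of_mul_add_map_mul_eq_zero_s19 hσ ha (map_relTrace hσ _) (map_relTrace hσ _) h
  by_cases hdσ : σ d = d
  · exact eq_zero_or_eq_of_map_eq_self hσ hb hd hdσ hP hQ
  · exact eq_zero_or_eq_of_map_ne_self hσ hAS hb hb₁ hb₂ hdσ hP hQ

theorem ncard_apnFun_derivative_le_two (hAS : ∀ c, σ c = c → ∃ u, u ^ 2 + u = c)
    (ha : σ a ≠ a) (hb : σ b ≠ b) (hb₁ : ¬∃ v, v ^ 3 = b ^ 2 * σ b)
    (hb₂ : ¬∃ v, v ^ 3 = b * σ b ^ 2) (hd : d ≠ 0) (β : F) :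
    {x | apnFun σ a b x + apnFun σ a b (x + d) = β}.ncard ≤ 2 := by
  refine ncard_le_two_of_forall_sub_eq (d := d) fun x hx y hy => ?_
  rw [Set.mem_ofPred_eq, apnFun_add_apnFun_add] at hx hy
  have hxy : apnPolar σ a b (x - y) d = 0 := by
    rw [CharTwo.sub_eq_add, apnPolar_add_left, CharTwo.add_eq_zero]
    exact add_left_cancel (hx.trans hy.symm)
  exact eq_zero_or_eq_of_apnPolar_eq_zero hσ hAS ha hb hb₁ hb₂ hd hxy

end Involution

section CharTwo

variable {F : Type*} [Field F] [CharP F 2]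

lemma sq_add_self_sum_pow_four_pow (x : F) (k : ℕ) :
    (∑ i ∈ range k, x ^ 4 ^ i) ^ 2 + ∑ i ∈ range k, x ^ 4 ^ i =
      ∑ j ∈ range (2 * k), x ^ 2 ^ j := by
  induction k with
  | zero => simp
  | succ k ih =>
    have h₀ : x ^ 2 ^ (2 * k) = x ^ 4 ^ k := by rw [pow_mul]; norm_num
    have h₁ : x ^ 2 ^ (2 * k + 1) = (x ^ 4 ^ k) ^ 2 := by rw [pow_succ, pow_mul, h₀]
    rw [sum_range_succ, add_pow_char, Nat.mul_succ, sum_range_succ, sum_range_succ, h₀, h₁,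
      ← ih]
    ring

lemma sq_sum_pow_two_pow_add_self (x : F) (m : ℕ) :
    (∑ j ∈ range m, x ^ 2 ^ j) ^ 2 + x = ∑ j ∈ range m, x ^ 2 ^ j + x ^ 2 ^ m := by
  induction m with
  | zero => simp
  | succ m ih =>
    rw [sum_range_succ, add_pow_char, pow_succ 2 m, pow_mul]
    linear_combination ih

-- `u = H + τ ω` with the half-trace `H = ∑_{2i < m} c ^ 4 ^ i` and `τ = ∑_{j < m} c ^ 2 ^ j`,
-- which satisfy `H ^ 2 + H = τ + c` and `τ ^ 2 = τ`.
lemma exists_sq_add_self_eq {m : ℕ} (hm : Odd m) {ω : F} (hω : ω ^ 2 + ω + 1 = 0) {c : F}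
    (hc : c ^ 2 ^ m = c) : ∃ u, u ^ 2 + u = c := by
  obtain ⟨k, rfl⟩ := hm
  have hτ := sq_sum_pow_two_pow_add_self c (2 * k + 1)
  have hH := sq_add_self_sum_pow_four_pow c (k + 1)
  rw [Nat.mul_succ, sum_range_succ (fun j => c ^ 2 ^ j)] at hH
  rw [hc] at hτ hH
  generalize ∑ j ∈ range (2 * k + 1), c ^ 2 ^ j = τ at hτ hH
  generalize ∑ i ∈ range (k + 1), c ^ 4 ^ i = H at hH
  exact ⟨H + τ * ω, by
    linear_combination (norm := (ring_nf; reduce_mod_char!)) hH + ω ^ 2 * hτ + τ * hω⟩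

end CharTwo

lemma exists_sq_add_add_one_eq_zero {F : Type*} [Field F] [Finite F]
    (h : ¬Surjective fun x : F => x ^ 3) : ∃ ω : F, ω ^ 2 + ω + 1 = 0 := by
  rw [← Finite.injective_iff_surjective] at h
  obtain ⟨x, y, hxy, hne⟩ : ∃ x y : F, x ^ 3 = y ^ 3 ∧ x ≠ y := by
    simpa [Injective] using h
  have hy : y ≠ 0 := by
    rintro rfl
    exact hne (pow_eq_zero_iff three_ne_zero |>.mp (by simpa using hxy))
  have hω : x / y - 1 ≠ 0 := by rwa [sub_ne_zero, Ne, div_eq_one_iff_eq hy]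
  refine ⟨x / y, (mul_eq_zero.mp ?_).resolve_left hω⟩
  field_simp
  linear_combination hxy

section Cubes

variable {F : Type*} [Field F] {m : ℕ} (hm : Odd m)
include hm

lemma exists_pow_two_pow_mul_self_eq_pow_three (b : F) : ∃ k, b ^ 2 ^ m * b = (b ^ k) ^ 3 := by
  obtain ⟨k, hk⟩ : 3 ∣ 2 ^ m + 1 := by simpa using Odd.nat_add_dvd_pow_add_pow 2 1 hm
  exact ⟨k, by rw [← pow_succ, hk, pow_mul']⟩

variable {b : F}

lemma pow_two_pow_ne_self (hb : ¬∃ v, v ^ 3 = b) : b ^ 2 ^ m ≠ b := by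
  intro h
  have hb0 : b ≠ 0 := by rintro rfl; exact hb ⟨0, by norm_num⟩
  obtain ⟨k, hk⟩ := exists_pow_two_pow_mul_self_eq_pow_three hm b
  refine hb ⟨b / b ^ k, ?_⟩
  rw [div_pow, ← hk, h]
  field_simp

lemma not_exists_pow_three_eq_sq_mul_pow_two_pow (hb : ¬∃ v, v ^ 3 = b) :
    ¬∃ v, v ^ 3 = b ^ 2 * b ^ 2 ^ m := by
  rintro ⟨v, hv⟩
  have hb0 : b ≠ 0 := by rintro rfl; exact hb ⟨0, by norm_num⟩
  obtain ⟨k, hk⟩ := exists_pow_two_pow_mul_self_eq_pow_three hm b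
  refine hb ⟨v / b ^ k, ?_⟩
  rw [div_pow, hv, ← hk]
  field_simp

lemma not_exists_pow_three_eq_mul_sq_pow_two_pow (hb : ¬∃ v, v ^ 3 = b) :
    ¬∃ v, v ^ 3 = b * (b ^ 2 ^ m) ^ 2 := by
  rintro ⟨v, hv⟩
  have hb0 : b ≠ 0 := by rintro rfl; exact hb ⟨0, by norm_num⟩
  obtain ⟨k, hk⟩ := exists_pow_two_pow_mul_self_eq_pow_three hm b
  refine hb ⟨(b ^ k) ^ 2 / v, ?_⟩
  rw [div_pow, show ((b ^ k) ^ 2) ^ 3 = ((b ^ k) ^ 3) ^ 2 by ring, ← hk, hv]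
  field_simp

end Cubes

lemma iterateFrobenius_involutive_s19 {F : Type*} [Field F] [Finite F] {p m : ℕ} [ExpChar F p]
    (hF : Nat.card F = p ^ (2 * m)) : Involutive (iterateFrobenius F p m) := fun x => by
  let _ := Fintype.ofFinite F
  rw [iterateFrobenius_def, iterateFrobenius_def, ← pow_mul, ← pow_add, ← two_mul, ← hF,
    Nat.card_eq_fintype_card, FiniteField.pow_card]

theorem stmt_19 (m : ℕ) (hm : 0 < m) (hodd : Odd m)
    (a b : GaloisField 2 (2 * m))
    (ha : a ^ (2 ^ m) ≠ a)
    (hb : ¬ ∃ β : GaloisField 2 (2 * m), β ^ 3 = b)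
    (h : GaloisField 2 (2 * m) → GaloisField 2 (2 * m))
    (hh : ∀ x, h x = a * (b * x ^ 3 + (b * x ^ 3) ^ (2 ^ m)) +
        a ^ (2 ^ m) * ((b * x ^ 5 + b * x ^ (4 * 2 ^ m + 1)) +
          (b * x ^ 5 + b * x ^ (4 * 2 ^ m + 1)) ^ (2 ^ m))) :
    ∀ d : GaloisField 2 (2 * m), d ≠ 0 → ∀ β : GaloisField 2 (2 * m),
      {x : GaloisField 2 (2 * m) | h x + h (x + d) = β}.ncard ≤ 2 := by
  intro d hd β
  have hσ : Involutive (iterateFrobenius (GaloisField 2 (2 * m)) 2 m) :=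
    iterateFrobenius_involutive_s19 (GaloisField.card 2 _ (by omega))
  have h_eq : h = apnFun (iterateFrobenius _ 2 m) a b := funext fun x => by
    simp only [hh, apnFun, relTrace, iterateFrobenius_def]
    ring
  obtain ⟨ω, hω⟩ := exists_sq_add_add_one_eq_zero fun hsurj => hb (hsurj b)
  rw [h_eq]
  exact ncard_apnFun_derivative_le_two hσ (fun c hc => exists_sq_add_self_eq hodd hω hc) ha
    (pow_two_pow_ne_self hodd hb) (not_exists_pow_three_eq_sq_mul_pow_two_pow hodd hb)
    (not_exists_pow_three_eq_mul_sq_pow_two_pow hodd hb) hd β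
end
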